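/- arXiv:math/0610355 — 6 statements merged into one kernel-verified Lean document; each statement's English description precedes it below -/
import Mathlib

section
/- Let μ be a probability measure on ℝ. Then ∫ e^{iux} dμ(x) → 0 as |u| → ∞ with u ranging over the reals, if and only if ∫ e^{2πikx} dμ(x) → 0 as |k| → ∞ with k ranging over the integers (equivalently, the pushforward of μ under the fractional part map x ↦ {x} is a Rajchman measure on the torus). -/
open MeasureTheory Filter Set
open scoped Topology

/-!
In `L²(μ)` the characters `e_t = (x ↦ exp (i t x))` satisfy `⟪e_s, e_t⟫ = φ (t - s)`, where `φ` is
the characteristic function of `μ`. If `φ` vanishes at infinity along the lattice `2πℤ`, then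
`⟪e_{-2πk}, y⟫ → 0` for every `y` in the closed span `K` of the lattice characters, and hence for
every `y` at all: `e_{-2πk} ∈ K`, so `⟪e_{-2πk}, y⟫ = ⟪e_{-2πk}, P_K y⟫`. With `y = e_t` this says
`φ (2πk + t) → 0` for each fixed `t`. Since `t ↦ e_t` is continuous, these translates are
equicontinuous in `t`, so by Ascoli the convergence is uniform over a period, i.e. `φ → 0`.
-/

section Hilbert

variable {ι 𝕜 E : Type*} [RCLike 𝕜] [NormedAddCommGroup E] [InnerProductSpace 𝕜 E]

theorem uniformEquicontinuous_inner_left {v : ι → E} {C : ℝ} (hv : ∀ i, ‖v i‖ ≤ C) :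
    UniformEquicontinuous fun i (y : E) => inner 𝕜 (v i) y :=
  LipschitzWith.uniformEquicontinuous _ C.toNNReal fun i =>
    LipschitzWith.of_dist_le_mul fun x y => by
      rw [dist_eq_norm, dist_eq_norm, ← inner_sub_right]
      exact (norm_inner_le_norm _ _).trans
        (mul_le_mul_of_nonneg_right ((hv i).trans (Real.le_coe_toNNReal C)) (norm_nonneg _))

theorem tendsto_inner_of_mem_topologicalClosure_span [CompleteSpace E] {l : Filter ι}
    {v : ι → E} {C : ℝ} (hv : ∀ i, ‖v i‖ ≤ C) {s : Set E}
    (hs : ∀ y ∈ s, Tendsto (fun i => inner 𝕜 (v i) y) l (𝓝 0))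
    (hvs : ∀ i, v i ∈ (Submodule.span 𝕜 s).topologicalClosure) (x : E) :
    Tendsto (fun i => inner 𝕜 (v i) x) l (𝓝 0) := by
  set K := (Submodule.span 𝕜 s).topologicalClosure
  let Z : Submodule 𝕜 E :=
    { carrier := {y | Tendsto (fun i => inner 𝕜 (v i) y) l (𝓝 0)}
      add_mem' := fun hx hy => by
        simpa only [mem_ofPred_eq, inner_add_right, add_zero] using hx.add hy
      zero_mem' := by simp only [mem_ofPred_eq, inner_zero_right, tendsto_const_nhds]
      smul_mem' := fun c y hy => by
        simpa only [mem_ofPred_eq, inner_smul_right, mul_zero] using hy.const_mul c }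
  have hZ : IsClosed (Z : Set E) :=
    (uniformEquicontinuous_inner_left hv).equicontinuous.isClosed_setOfPred_tendsto
      continuous_const
  have hKZ : K ≤ Z := Submodule.topologicalClosure_minimal _ (Submodule.span_le.2 hs) hZ
  have hproj (i : ι) : inner 𝕜 (v i) x = inner 𝕜 (v i) (K.starProjection x) := by
    rw [← K.inner_starProjection_left_eq_right, K.starProjection_eq_self_iff.2 (hvs i)]
  simp only [hproj]
  exact hKZ (K.starProjection_apply_mem x)

end Hilbert

theorem Equicontinuous.comp_continuous {ι X Y α : Type*} [TopologicalSpace X]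
    [TopologicalSpace Y] [UniformSpace α] {F : ι → Y → α} (hF : Equicontinuous F) {g : X → Y}
    (hg : Continuous g) : Equicontinuous fun i => F i ∘ g :=
  equicontinuous_iff_continuous.2 ((equicontinuous_iff_continuous.1 hF).comp hg)

theorem Int.tendsto_floor_cocompact : Tendsto (Int.floor : ℝ → ℤ) (cocompact ℝ) cofinite := by
  rw [cocompact_eq_atBot_atTop, Int.cofinite_eq]
  exact tendsto_floor_atBot.sup_sup tendsto_floor_atTop

theorem tendsto_cocompact_of_tendsto_int_add {α : Type*} [UniformSpace α] {f : ℝ → α} {a : α}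
    (hf : Equicontinuous fun (k : ℤ) (t : ℝ) => f (k + t))
    (h : ∀ t, Tendsto (fun k : ℤ => f (k + t)) cofinite (𝓝 a)) :
    Tendsto f (cocompact ℝ) (𝓝 a) := by
  let F (k : ℤ) (t : Icc (0 : ℝ) 1) : α := f (k + t)
  have hF : Equicontinuous F := (equicontinuous_restrict_iff _).2 (hf.equicontinuousOn _)
  have hunif : TendstoUniformly F (fun _ => a) cofinite :=
    UniformFun.tendsto_iff_tendstoUniformly.1 <|
      (hF.tendsto_uniformFun_iff_pi _ _).2 (tendsto_pi_nhds.2 fun t => h t)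
  refine Uniform.tendsto_nhds_right.2 fun U hU => mem_map.2 ?_
  filter_upwards [Int.tendsto_floor_cocompact.eventually (hunif U hU)] with v hv
  simpa only [F, Int.floor_add_fract, mem_preimage] using
    hv ⟨Int.fract v, Int.fract_nonneg v, (Int.fract_lt_one v).le⟩

section CharL2

variable {μ : Measure ℝ} [IsFiniteMeasure μ]

variable (μ) in
noncomputable def charL2 (t : ℝ) : Lp ℂ 2 μ :=
  BoundedContinuousFunction.toLp 2 μ ℂ (BoundedContinuousFunction.innerProbChar t)

theorem inner_charL2 (s t : ℝ) : inner ℂ (charL2 μ s) (charL2 μ t) = charFun μ (t - s) := by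
  rw [charL2, charL2, BoundedContinuousFunction.inner_toLp, charFun_apply]
  congr 1 with x
  simp only [BoundedContinuousFunction.innerProbChar_apply, ← Complex.exp_conj, ← Complex.exp_add,
    map_mul, Complex.conj_ofReal, Complex.conj_I, inner_sub_right, Complex.ofReal_sub]
  ring_nf

theorem charFun_add_eq_inner_charL2 (s t : ℝ) :
    charFun μ (s + t) = inner ℂ (charL2 μ (-s)) (charL2 μ t) := by
  rw [inner_charL2, sub_neg_eq_add, add_comm]

theorem norm_sq_charL2 (t : ℝ) : ‖charL2 μ t‖ ^ 2 = μ.real univ := by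
  rw [@norm_sq_eq_re_inner ℂ, inner_charL2, sub_self, charFun_zero, RCLike.re_to_complex,
    Complex.ofReal_re]

theorem norm_charL2 (t : ℝ) : ‖charL2 μ t‖ = √(μ.real univ) := by
  rw [← norm_sq_charL2 t, Real.sqrt_sq (norm_nonneg _)]

theorem norm_charL2_sub (s t : ℝ) :
    ‖charL2 μ s - charL2 μ t‖ = √(2 * (μ.real univ - (charFun μ (t - s)).re)) := by
  rw [← Real.sqrt_sq (norm_nonneg _), @norm_sub_sq ℂ, norm_sq_charL2, norm_sq_charL2,
    inner_charL2, RCLike.re_to_complex]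
  ring_nf

theorem continuous_charL2 : Continuous (charL2 μ) := by
  refine continuous_iff_continuousAt.2 fun t => tendsto_iff_norm_sub_tendsto_zero.2 ?_
  simp_rw [norm_charL2_sub]
  have : Continuous fun s => √(2 * (μ.real univ - (charFun μ (t - s)).re)) := by fun_prop
  simpa using this.tendsto t

theorem tendsto_charFun_int_mul_add {p : ℝ}
    (h : Tendsto (fun k : ℤ => charFun μ (p * k)) cofinite (𝓝 0)) (t : ℝ) :
    Tendsto (fun k : ℤ => charFun μ (p * k + t)) cofinite (𝓝 0) := by
  have hs : ∀ y ∈ range fun j : ℤ => charL2 μ (p * j),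
      Tendsto (fun k : ℤ => inner ℂ (charL2 μ (-(p * k))) y) cofinite (𝓝 0) := by
    rintro _ ⟨j, rfl⟩
    simp_rw [← charFun_add_eq_inner_charL2]
    refine (h.comp (add_left_injective j).tendsto_cofinite).congr fun k => congrArg (charFun μ) ?_
    push_cast
    ring
  have hvs (k : ℤ) : charL2 μ (-(p * k)) ∈
      (Submodule.span ℂ (range fun j : ℤ => charL2 μ (p * j))).topologicalClosure :=
    Submodule.le_topologicalClosure _ (Submodule.subset_span ⟨-k, by push_cast; ring_nf⟩)
  simpa only [← charFun_add_eq_inner_charL2] using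
    tendsto_inner_of_mem_topologicalClosure_span (fun k => (norm_charL2 _).le) hs hvs (charL2 μ t)

theorem tendsto_charFun_cocompact_of_tendsto_int_mul {p : ℝ} (hp : p ≠ 0)
    (h : Tendsto (fun k : ℤ => charFun μ (p * k)) cofinite (𝓝 0)) :
    Tendsto (charFun μ) (cocompact ℝ) (𝓝 0) := by
  have hequi : Equicontinuous fun (k : ℤ) (t : ℝ) => charFun μ (p * (k + t)) := by
    simp_rw [mul_add, charFun_add_eq_inner_charL2]
    exact (uniformEquicontinuous_inner_left fun k : ℤ => (norm_charL2 _).le).equicontinuous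
      |>.comp_continuous (continuous_charL2.comp (continuous_const_mul p))
  have hscaled : Tendsto (fun v => charFun μ (p * v)) (cocompact ℝ) (𝓝 0) :=
    tendsto_cocompact_of_tendsto_int_add hequi fun t => by
      simpa only [mul_add] using tendsto_charFun_int_mul_add h (p * t)
  have hdiv : Tendsto (fun u : ℝ => p⁻¹ * u) (cocompact ℝ) (cocompact ℝ) :=
    (Homeomorph.mulLeft₀ p⁻¹ (inv_ne_zero hp)).isClosedEmbedding.tendsto_cocompact
  simpa only [Function.comp_def, mul_inv_cancel_left₀ hp] using hscaled.comp hdiv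

end CharL2

/-- For a probability measure `μ` on `ℝ`, the Fourier transform
`u ↦ ∫ e^{iux} dμ` vanishes as `|u| → ∞` over the reals iff the Fourier coefficients
`k ↦ ∫ e^{2πikx} dμ`, `k ∈ ℤ`, vanish as `|k| → ∞` (i.e. the fractional-part
pushforward of `μ` is Rajchman on the torus). -/
theorem rajchman_iff_integer_frequencies
    (μ : Measure ℝ) [IsProbabilityMeasure μ] :
    Tendsto (fun u : ℝ => ∫ x, Complex.exp (Complex.I * u * x) ∂μ)
      (cocompact ℝ) (𝓝 0) ↔
    Tendsto (fun k : ℤ => ∫ x, Complex.exp (2 * Real.pi * Complex.I * k * x) ∂μ)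
      (cocompact ℤ) (𝓝 0) := by
  have hreal : (fun u : ℝ => ∫ x, Complex.exp (Complex.I * u * x) ∂μ) = charFun μ := by
    ext u
    simp only [charFun_apply_real, mul_comm Complex.I, mul_right_comm _ Complex.I]
  have hint : (fun k : ℤ => ∫ x, Complex.exp (2 * Real.pi * Complex.I * k * x) ∂μ) =
      fun k : ℤ => charFun μ (2 * Real.pi * k) := by
    ext k
    simp only [charFun_apply_real]
    push_cast
    ring_nf
  have hlattice : Tendsto (fun k : ℤ => 2 * Real.pi * (k : ℝ)) cofinite (cocompact ℝ) :=
    (Homeomorph.mulLeft₀ _ Real.two_pi_pos.ne').isClosedEmbedding.tendsto_cocompact.comp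
      Int.tendsto_coe_cofinite
  rw [hreal, hint, cocompact_eq_cofinite ℤ]
  exact ⟨fun h => h.comp hlattice,
    tendsto_charFun_cocompact_of_tendsto_int_mul Real.two_pi_pos.ne'⟩
end

section
/- Let Y, Y_n (n ∈ ℕ) be measurable maps from a probability space (Ω, 𝒜, ℙ) to a measurable space (E, ℱ), P_Y the law of Y, α_n positive reals, and 𝒟 an algebra of bounded measurable real functions on E containing the constants and dense in L²(P_Y). Assume hypothesis (H3): for each φ ∈ 𝒟 there exists Ã[φ] ∈ L²(P_Y) such that for all χ ∈ 𝒟, α_n 𝔼[(φ(Y_n) − φ(Y))(χ(Y_n) − χ(Y))] → −2 ∫ Ã[φ] χ dP_Y. Define ℰ(φ, χ) := lim_n (α_n/2) 𝔼[(φ(Y_n) − φ(Y))(χ(Y_n) − χ(Y))] = −∫ Ã[φ] χ dP_Y for φ, χ ∈ 𝒟. Then ℰ(φ, φ) ≥ 0 for all φ ∈ 𝒟, and the form ℰ is closable on 𝒟 in L²(P_Y): for every sequence (φ_k) in 𝒟 with ∫ φ_k² dP_Y → 0 and ℰ(φ_k − φ_l, φ_k − φ_l) → 0 as k, l → ∞,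 one has ℰ(φ_k, φ_k) → 0. -/
/-!
By (H3), `ℰ(φ, χ) = -∫ Ã[φ] χ dP_Y` is the limit of `(α_n / 2) 𝔼[(φ(Y_n) - φ(Y))(χ(Y_n) - χ(Y))]`,
which is symmetric in `φ, χ` and nonnegative for `χ = φ`. Linearity of the integral in `χ` then
makes `ℰ` a positive symmetric bilinear form on `𝒟`, so it satisfies Cauchy–Schwarz. For
closability write `ℰ(φ_k, φ_k) = ℰ(φ_k, φ_l) + ℰ(φ_k, φ_k - φ_l)`: the first term tends to `0`
as `l → ∞` because `Ã[φ_k] ∈ L²` and `φ_l → 0` in `L²`, and the square of the second is at most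
`ℰ(φ_k, φ_k) ℰ(φ_k - φ_l, φ_k - φ_l)`. Hence `ℰ(φ_k, φ_k)² ≤ ℰ(φ_k, φ_k) ε` for large `k`.
-/


open MeasureTheory Filter
open scoped Topology

section SymmetricForm

variable {V : Type*} [AddCommGroup V] [Module ℝ V] {S : Set V} {B : V → V → ℝ}

/-- Cauchy–Schwarz, via the discriminant of `t ↦ B (x + t • y) (x + t • y)`. Unlike
`LinearMap.BilinForm.apply_sq_le_of_symm`, `B` is only assumed bilinear on `S`, which need not be
a submodule. -/
theorem sq_le_mul_of_symm_of_nonneg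
    (hS : ∀ x ∈ S, ∀ y ∈ S, ∀ t : ℝ, x + t • y ∈ S)
    (hsymm : ∀ x ∈ S, ∀ y ∈ S, B x y = B y x)
    (hlin : ∀ x ∈ S, ∀ y ∈ S, ∀ z ∈ S, ∀ t : ℝ, B x (y + t • z) = B x y + t * B x z)
    (hnonneg : ∀ x ∈ S, 0 ≤ B x x) {x y : V} (hx : x ∈ S) (hy : y ∈ S) :
    B x y ^ 2 ≤ B x x * B y y := by
  have hquad : ∀ t : ℝ, 0 ≤ B y y * (t * t) + 2 * B x y * t + B x x := by
    intro t
    have hxt := hS x hx y hy t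
    have hexpand : B (x + t • y) (x + t • y) = B y y * (t * t) + 2 * B x y * t + B x x := by
      rw [hlin _ hxt x hx y hy, hsymm _ hxt x hx, hsymm _ hxt y hy, hlin x hx x hx y hy,
        hlin y hy x hx y hy, hsymm y hy x hx]
      ring
    exact hexpand ▸ hnonneg _ hxt
  have := discrim_le_zero hquad
  rw [discrim] at this
  nlinarith

theorem tendsto_apply_self_zero_of_cauchy
    (hS : ∀ x ∈ S, ∀ y ∈ S, ∀ t : ℝ, x + t • y ∈ S)
    (hsymm : ∀ x ∈ S, ∀ y ∈ S, B x y = B y x)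
    (hlin : ∀ x ∈ S, ∀ y ∈ S, ∀ z ∈ S, ∀ t : ℝ, B x (y + t • z) = B x y + t * B x z)
    (hnonneg : ∀ x ∈ S, 0 ≤ B x x) {φ : ℕ → V} (hφ : ∀ k, φ k ∈ S)
    (hweak : ∀ k, Tendsto (fun l => B (φ k) (φ l)) atTop (𝓝 0))
    (hcauchy : ∀ ε : ℝ, 0 < ε → ∃ N : ℕ, ∀ k ≥ N, ∀ l ≥ N, B (φ k - φ l) (φ k - φ l) < ε) :
    Tendsto (fun k => B (φ k) (φ k)) atTop (𝓝 0) := by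
  have hsub : ∀ k l, φ k - φ l ∈ S := fun k l => by
    simpa [sub_eq_add_neg] using hS _ (hφ k) _ (hφ l) (-1)
  rw [Metric.tendsto_atTop]
  intro ε hε
  obtain ⟨N, hN⟩ := hcauchy (ε / 2) (half_pos hε)
  refine ⟨N, fun k hk => ?_⟩
  set e := B (φ k) (φ k)
  have he : 0 ≤ e := hnonneg _ (hφ k)
  -- `e - B (φ k) (φ l) = B (φ k) (φ k - φ l)`, which Cauchy–Schwarz bounds by `e * (ε / 2)`.
  have hclose : ∀ l ≥ N, (e - B (φ k) (φ l)) ^ 2 ≤ e * (ε / 2) := by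
    intro l hl
    have hsplit : e = B (φ k) (φ l) + B (φ k) (φ k - φ l) := by
      simpa using hlin _ (hφ k) _ (hφ l) _ (hsub k l) 1
    rw [hsplit, add_sub_cancel_left, ← hsplit]
    calc B (φ k) (φ k - φ l) ^ 2 ≤ e * B (φ k - φ l) (φ k - φ l) :=
          sq_le_mul_of_symm_of_nonneg hS hsymm hlin hnonneg (hφ k) (hsub k l)
      _ ≤ e * (ε / 2) := mul_le_mul_of_nonneg_left (hN k hk l hl).le he
  have hlim : Tendsto (fun l => (e - B (φ k) (φ l)) ^ 2) atTop (𝓝 ((e - 0) ^ 2)) :=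
    ((tendsto_const_nhds.sub (hweak k)).pow 2)
  have : e ^ 2 ≤ e * (ε / 2) := by
    simpa using le_of_tendsto hlim (eventually_atTop.mpr ⟨N, hclose⟩)
  rw [Real.dist_eq, sub_zero, abs_of_nonneg he]
  nlinarith

end SymmetricForm

section L2

variable {α : Type*} [MeasurableSpace α] {μ : Measure α} {f g h : α → ℝ}

theorem integral_mul_add_smul (hf : MemLp f 2 μ) (hg : MemLp g 2 μ) (hh : MemLp h 2 μ) (t : ℝ) :
    ∫ x, f x * (g + t • h) x ∂μ = ∫ x, f x * g x ∂μ + t * ∫ x, f x * h x ∂μ := by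
  have hfg : Integrable (fun x => f x * g x) μ := hf.integrable_mul hg
  have hfh : Integrable (fun x => t * (f x * h x)) μ := (hf.integrable_mul hh).const_mul t
  calc ∫ x, f x * (g + t • h) x ∂μ = ∫ x, f x * g x + t * (f x * h x) ∂μ := by
        congr 1 with x
        simp only [Pi.add_apply, Pi.smul_apply, smul_eq_mul]
        ring
    _ = ∫ x, f x * g x ∂μ + t * ∫ x, f x * h x ∂μ := by
        rw [integral_add hfg hfh, integral_const_mul]

theorem sq_integral_mul_le (hf : MemLp f 2 μ) (hg : MemLp g 2 μ) :
    (∫ x, f x * g x ∂μ) ^ 2 ≤ (∫ x, f x * f x ∂μ) * ∫ x, g x * g x ∂μ :=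
  sq_le_mul_of_symm_of_nonneg (S := {f | MemLp f 2 μ}) (B := fun f g => ∫ x, f x * g x ∂μ)
    (fun _ hf _ hg t => hf.add (hg.const_smul t))
    (fun _ _ _ _ => by simp only [mul_comm])
    (fun _ hf _ hg _ hh t => integral_mul_add_smul hf hg hh t)
    (fun _ _ => integral_nonneg fun _ => mul_self_nonneg _) hf hg

theorem tendsto_integral_mul_of_tendsto_integral_sq {g : ℕ → α → ℝ} (hf : MemLp f 2 μ)
    (hg : ∀ n, MemLp (g n) 2 μ) (hg0 : Tendsto (fun n => ∫ x, g n x ^ 2 ∂μ) atTop (𝓝 0)) :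
    Tendsto (fun n => ∫ x, f x * g n x ∂μ) atTop (𝓝 0) := by
  have hsq : Tendsto (fun n => (∫ x, f x * g n x ∂μ) ^ 2) atTop (𝓝 0) := by
    refine squeeze_zero (fun n => sq_nonneg _) (fun n => ?_)
      (by simpa using hg0.const_mul (∫ x, f x * f x ∂μ))
    simpa only [sq] using sq_integral_mul_le hf (hg n)
  rw [tendsto_zero_iff_abs_tendsto_zero]
  simpa [Function.comp_def, Real.sqrt_sq_eq_abs] using hsq.sqrt

end L2

section Form

variable {E : Type*} [MeasurableSpace E]

noncomputable def energyForm (μ : Measure E) (A : (E → ℝ) → E → ℝ) (φ χ : E → ℝ) : ℝ :=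
  -∫ x, A φ x * χ x ∂μ

theorem energyForm_add_smul_right {μ : Measure E} {A : (E → ℝ) → E → ℝ} {φ χ ψ : E → ℝ}
    (hφ : MemLp (A φ) 2 μ) (hχ : MemLp χ 2 μ) (hψ : MemLp ψ 2 μ) (t : ℝ) :
    energyForm μ A φ (χ + t • ψ) = energyForm μ A φ χ + t * energyForm μ A φ ψ := by
  rw [energyForm, integral_mul_add_smul hφ hχ hψ, energyForm, energyForm]
  ring

end Form

theorem H3_gives_positive_closable_form_general
    {Ω E : Type*} [MeasurableSpace Ω] [MeasurableSpace E]
    (P : Measure Ω) [IsProbabilityMeasure P]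
    (Y : Ω → E) (Yn : ℕ → Ω → E)
    (α : ℕ → ℝ) (hα : ∀ n, 0 < α n)
    (𝒟 : Set (E → ℝ))
    (h_meas : ∀ φ ∈ 𝒟, Measurable φ)
    (h_bdd : ∀ φ ∈ 𝒟, ∃ C : ℝ, ∀ x, |φ x| ≤ C)
    (h_add : ∀ φ ∈ 𝒟, ∀ χ ∈ 𝒟, φ + χ ∈ 𝒟)
    (h_smul : ∀ c : ℝ, ∀ φ ∈ 𝒟, c • φ ∈ 𝒟)
    (Atil : (E → ℝ) → (E → ℝ))
    (hAtilL2 : ∀ φ ∈ 𝒟, MemLp (Atil φ) 2 (Measure.map Y P))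
    (hH3 : ∀ φ ∈ 𝒟, ∀ χ ∈ 𝒟,
      Tendsto (fun n => α n * ∫ ω, (φ (Yn n ω) - φ (Y ω)) * (χ (Yn n ω) - χ (Y ω)) ∂P)
        atTop (𝓝 (-2 * ∫ x, Atil φ x * χ x ∂(Measure.map Y P)))) :
    (∀ φ ∈ 𝒟, 0 ≤ -∫ x, Atil φ x * φ x ∂(Measure.map Y P)) ∧
    (∀ φ : ℕ → E → ℝ, (∀ k, φ k ∈ 𝒟) →
      Tendsto (fun k => ∫ x, φ k x ^ 2 ∂(Measure.map Y P)) atTop (𝓝 0) →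
      (∀ ε : ℝ, 0 < ε → ∃ N : ℕ, ∀ k ≥ N, ∀ l ≥ N,
        -∫ x, Atil (φ k - φ l) x * (φ k x - φ l x) ∂(Measure.map Y P) < ε) →
      Tendsto (fun k => -∫ x, Atil (φ k) x * φ k x ∂(Measure.map Y P)) atTop (𝓝 0)) := by
  set μ := Measure.map Y P
  have hL2 : ∀ φ ∈ 𝒟, MemLp φ 2 μ := fun φ hφ => by
    obtain ⟨C, hC⟩ := h_bdd φ hφ
    exact MemLp.of_bound (h_meas φ hφ).aestronglyMeasurable C (ae_of_all _ hC)
  have hS : ∀ φ ∈ 𝒟, ∀ χ ∈ 𝒟, ∀ t : ℝ, φ + t • χ ∈ 𝒟 := fun φ hφ χ hχ t =>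
    h_add φ hφ _ (h_smul t χ hχ)
  have hsymm : ∀ φ ∈ 𝒟, ∀ χ ∈ 𝒟, energyForm μ Atil φ χ = energyForm μ Atil χ φ := by
    intro φ hφ χ hχ
    have := tendsto_nhds_unique (hH3 φ hφ χ hχ) <| (hH3 χ hχ φ hφ).congr fun n => by
      simp_rw [mul_comm (χ _ - χ _)]
    rw [energyForm, energyForm]
    linarith
  have hnonneg : ∀ φ ∈ 𝒟, 0 ≤ energyForm μ Atil φ φ := fun φ hφ => by
    have := ge_of_tendsto' (hH3 φ hφ φ hφ) fun n =>
      mul_nonneg (hα n).le (integral_nonneg fun ω => mul_self_nonneg _)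
    rw [energyForm]
    linarith
  have hlin : ∀ φ ∈ 𝒟, ∀ χ ∈ 𝒟, ∀ ψ ∈ 𝒟, ∀ t : ℝ,
      energyForm μ Atil φ (χ + t • ψ) = energyForm μ Atil φ χ + t * energyForm μ Atil φ ψ :=
    fun φ hφ χ hχ ψ hψ t => energyForm_add_smul_right (hAtilL2 φ hφ) (hL2 χ hχ) (hL2 ψ hψ) t
  refine ⟨hnonneg, fun φ hφ hφ0 hcauchy =>
    tendsto_apply_self_zero_of_cauchy hS hsymm hlin hnonneg hφ (fun k => ?_) hcauchy⟩
  simpa [energyForm] using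
    (tendsto_integral_mul_of_tendsto_integral_sq (hAtilL2 _ (hφ k)) (fun l => hL2 _ (hφ l)) hφ0).neg

/-- Under hypothesis (H3) on an algebra `𝒟` of bounded measurable functions,
dense in `L²(P_Y)`, containing the constants, the form
`ℰ(φ,χ) = lim (α_n/2) 𝔼[(φ(Y_n)−φ(Y))(χ(Y_n)−χ(Y))] = −∫ Ã[φ] χ dP_Y`
is positive on `𝒟` and closable in `L²(P_Y)`. -/
theorem H3_gives_positive_closable_form
    {Ω E : Type*} [MeasurableSpace Ω] [MeasurableSpace E]
    (P : Measure Ω) [IsProbabilityMeasure P]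
    (Y : Ω → E) (Yn : ℕ → Ω → E) (hY : Measurable Y) (hYn : ∀ n, Measurable (Yn n))
    (α : ℕ → ℝ) (hα : ∀ n, 0 < α n)
    (𝒟 : Set (E → ℝ))
    (h_meas : ∀ φ ∈ 𝒟, Measurable φ)
    (h_bdd : ∀ φ ∈ 𝒟, ∃ C : ℝ, ∀ x, |φ x| ≤ C)
    (h_add : ∀ φ ∈ 𝒟, ∀ χ ∈ 𝒟, φ + χ ∈ 𝒟)
    (h_smul : ∀ c : ℝ, ∀ φ ∈ 𝒟, c • φ ∈ 𝒟)
    (h_mul : ∀ φ ∈ 𝒟, ∀ χ ∈ 𝒟, φ * χ ∈ 𝒟)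
    (h_const : ∀ c : ℝ, (fun _ => c) ∈ 𝒟)
    (h_dense : ∀ f : E → ℝ, MemLp f 2 (Measure.map Y P) → ∀ ε : ℝ, 0 < ε →
      ∃ φ ∈ 𝒟, eLpNorm (f - φ) 2 (Measure.map Y P) < ENNReal.ofReal ε)
    (Atil : (E → ℝ) → (E → ℝ))
    (hAtilL2 : ∀ φ ∈ 𝒟, MemLp (Atil φ) 2 (Measure.map Y P))
    (hH3 : ∀ φ ∈ 𝒟, ∀ χ ∈ 𝒟,
      Tendsto (fun n => α n * ∫ ω, (φ (Yn n ω) - φ (Y ω)) * (χ (Yn n ω) - χ (Y ω)) ∂P)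
        atTop (𝓝 (-2 * ∫ x, Atil φ x * χ x ∂(Measure.map Y P)))) :
    (∀ φ ∈ 𝒟, 0 ≤ -∫ x, Atil φ x * φ x ∂(Measure.map Y P)) ∧
    (∀ φ : ℕ → E → ℝ, (∀ k, φ k ∈ 𝒟) →
      Tendsto (fun k => ∫ x, φ k x ^ 2 ∂(Measure.map Y P)) atTop (𝓝 0) →
      (∀ ε : ℝ, 0 < ε → ∃ N : ℕ, ∀ k ≥ N, ∀ l ≥ N,
        -∫ x, Atil (φ k - φ l) x * (φ k x - φ l x) ∂(Measure.map Y P) < ε) →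
      Tendsto (fun k => -∫ x, Atil (φ k) x * φ k x ∂(Measure.map Y P)) atTop (𝓝 0)) :=
  H3_gives_positive_closable_form_general P Y Yn α hα 𝒟 h_meas h_bdd h_add h_smul Atil hAtilL2 hH3
end

section
/- Let Y, Y_n (n ∈ ℕ) be measurable maps from a probability space (Ω, 𝒜, ℙ) to a measurable space (E, ℱ), P_Y the law of Y, α_n positive reals, and 𝒟 an algebra of bounded measurable real functions on E containing the constants and dense in L²(P_Y). Assume hypothesis (H3): for each φ ∈ 𝒟 there exists Ã[φ] ∈ L²(P_Y) such that for all χ ∈ 𝒟, α_n 𝔼[(φ(Y_n) − φ(Y))(χ(Y_n) − χ(Y))] → −2 ∫ Ã[φ] χ dP_Y. Then the associated square field operator Γ[φ] := Ã[φ²] − 2φ Ã[φ] satisfies, for all φ, χ ∈ 𝒟, lim_n α_n 𝔼[ (φ(Y_n) − φ(Y))² (χ(Y_n) + χ(Y))/2 ] = ∫ Γ[φ] χ dP_Y. -/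
open MeasureTheory Filter Set
open scoped Topology

/-!
Write `Δf = f(Y_n) − f(Y)`. The pointwise polarization identity
`(Δφ)² (χ(Y_n) + χ(Y))/2 = Δφ · Δ(φχ) − ½ Δ(φ²) · Δχ`
expresses the quantity of interest through two instances of (H3), namely the pairs `(φ, φχ)` and
`(φ², χ)`, whose limits `−2 ∫ Ã[φ] φχ` and `−2 ∫ Ã[φ²] χ` combine to `∫ (Ã[φ²] − 2φÃ[φ]) χ`.
-/

theorem sq_sub_mul_half_add (a b c d : ℝ) :
    (a - b) ^ 2 * ((c + d) / 2) = (a - b) * (a * c - b * d) - 1 / 2 * ((a * a - b * b) * (c - d)) := by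
  ring

section Increments

variable {Ω E : Type*} [MeasurableSpace Ω] {P : Measure Ω}

theorem integrable_increment_mul_increment [MeasurableSpace E] [IsFiniteMeasure P] {Y Z : Ω → E}
    (hY : Measurable Y) (hZ : Measurable Z) {ψ ξ : E → ℝ} (hψ : Measurable ψ) (hξ : Measurable ξ)
    {C D : ℝ} (hC : ∀ x, |ψ x| ≤ C) (hD : ∀ x, |ξ x| ≤ D) :
    Integrable (fun ω => (ψ (Z ω) - ψ (Y ω)) * (ξ (Z ω) - ξ (Y ω))) P := by
  refine .of_bound (by fun_prop) ((C + C) * (D + D)) (ae_of_all _ fun ω => ?_)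
  have hψ' : |ψ (Z ω) - ψ (Y ω)| ≤ C + C := (abs_sub _ _).trans (add_le_add (hC _) (hC _))
  have hξ' : |ξ (Z ω) - ξ (Y ω)| ≤ D + D := (abs_sub _ _).trans (add_le_add (hD _) (hD _))
  rw [Real.norm_eq_abs, abs_mul]
  exact mul_le_mul hψ' hξ' (abs_nonneg _) ((abs_nonneg _).trans hψ')

theorem integral_sq_increment_mul_half_add {Y Z : Ω → E} {φ χ : E → ℝ}
    (hφ : Integrable (fun ω => (φ (Z ω) - φ (Y ω)) * ((φ * χ) (Z ω) - (φ * χ) (Y ω))) P)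
    (hχ : Integrable (fun ω => ((φ * φ) (Z ω) - (φ * φ) (Y ω)) * (χ (Z ω) - χ (Y ω))) P) :
    ∫ ω, (φ (Z ω) - φ (Y ω)) ^ 2 * ((χ (Z ω) + χ (Y ω)) / 2) ∂P =
      ∫ ω, (φ (Z ω) - φ (Y ω)) * ((φ * χ) (Z ω) - (φ * χ) (Y ω)) ∂P -
        1 / 2 * ∫ ω, ((φ * φ) (Z ω) - (φ * φ) (Y ω)) * (χ (Z ω) - χ (Y ω)) ∂P := by
  rw [← integral_const_mul, ← integral_sub hφ (hχ.const_mul _)]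
  simp only [Pi.mul_apply, sq_sub_mul_half_add]

end Increments

theorem MeasureTheory.MemLp.integrable_mul_of_abs_le {E : Type*} [MeasurableSpace E]
    {μ : Measure E} [IsFiniteMeasure μ] {f ξ : E → ℝ} (hf : MemLp f 2 μ) (hξ : Measurable ξ)
    {D : ℝ} (hD : ∀ x, |ξ x| ≤ D) : Integrable (fun x => f x * ξ x) μ :=
  (hf.integrable one_le_two).mul_bdd hξ.aestronglyMeasurable (ae_of_all _ hD)

theorem integral_sub_two_mul_mul {E : Type*} [MeasurableSpace E] {μ : Measure E}
    {φ χ A A₂ : E → ℝ} (hA₂ : Integrable (fun x => A₂ x * χ x) μ)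
    (hA : Integrable (fun x => A x * (φ * χ) x) μ) :
    ∫ x, (A₂ x - 2 * φ x * A x) * χ x ∂μ =
      ∫ x, A₂ x * χ x ∂μ - 2 * ∫ x, A x * (φ * χ) x ∂μ := by
  rw [← integral_const_mul, ← integral_sub hA₂ (hA.const_mul _)]
  congr with x
  simp only [Pi.mul_apply]
  ring

theorem H3_square_field_operator_general
    {Ω E : Type*} [MeasurableSpace Ω] [MeasurableSpace E]
    (P : Measure Ω) [IsProbabilityMeasure P]
    (Y : Ω → E) (Yn : ℕ → Ω → E) (hY : Measurable Y) (hYn : ∀ n, Measurable (Yn n))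
    (α : ℕ → ℝ)
    (𝒟 : Set (E → ℝ))
    (h_meas : ∀ φ ∈ 𝒟, Measurable φ)
    (h_bdd : ∀ φ ∈ 𝒟, ∃ C : ℝ, ∀ x, |φ x| ≤ C)
    (h_mul : ∀ φ ∈ 𝒟, ∀ χ ∈ 𝒟, φ * χ ∈ 𝒟)
    (Atil : (E → ℝ) → (E → ℝ))
    (hAtilL2 : ∀ φ ∈ 𝒟, MemLp (Atil φ) 2 (Measure.map Y P))
    (hH3 : ∀ φ ∈ 𝒟, ∀ χ ∈ 𝒟,
      Tendsto (fun n => α n * ∫ ω, (φ (Yn n ω) - φ (Y ω)) * (χ (Yn n ω) - χ (Y ω)) ∂P)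
        atTop (𝓝 (-2 * ∫ x, Atil φ x * χ x ∂(Measure.map Y P)))) :
    ∀ φ ∈ 𝒟, ∀ χ ∈ 𝒟,
      Tendsto (fun n =>
          α n * ∫ ω, (φ (Yn n ω) - φ (Y ω)) ^ 2 * ((χ (Yn n ω) + χ (Y ω)) / 2) ∂P)
        atTop
        (𝓝 (∫ x, (Atil (φ * φ) x - 2 * φ x * Atil φ x) * χ x ∂(Measure.map Y P))) := by
  intro φ hφ χ hχ
  have hφχ := h_mul φ hφ χ hχ
  have hφφ := h_mul φ hφ φ hφ
  have hinc {ψ} (hψ : ψ ∈ 𝒟) {ξ} (hξ : ξ ∈ 𝒟) (n : ℕ) :=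
    integrable_increment_mul_increment (P := P) hY (hYn n) (h_meas ψ hψ) (h_meas ξ hξ)
      (h_bdd ψ hψ).choose_spec (h_bdd ξ hξ).choose_spec
  have hAtil {ψ} (hψ : ψ ∈ 𝒟) {ξ} (hξ : ξ ∈ 𝒟) :=
    (hAtilL2 ψ hψ).integrable_mul_of_abs_le (h_meas ξ hξ) (h_bdd ξ hξ).choose_spec
  convert (hH3 φ hφ (φ * χ) hφχ).sub ((hH3 (φ * φ) hφφ χ hχ).const_mul (1 / 2)) using 1
  · funext n
    rw [integral_sq_increment_mul_half_add (hinc hφ hφχ n) (hinc hφφ hχ n)]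
    ring
  · rw [integral_sub_two_mul_mul (hAtil hφφ hχ) (hAtil hφ hφχ)]
    congr 1
    ring

/-- Under hypothesis (H3) on an algebra `𝒟` of bounded measurable functions,
dense in `L²(P_Y)` and containing the constants, the square field operator
`Γ[φ] = Ã[φ²] − 2φÃ[φ]` satisfies, for all `φ, χ ∈ 𝒟`,
`lim α_n 𝔼[(φ(Y_n) − φ(Y))² (χ(Y_n) + χ(Y))/2] = ∫ Γ[φ] χ dP_Y`. -/
theorem H3_square_field_operator
    {Ω E : Type*} [MeasurableSpace Ω] [MeasurableSpace E]
    (P : Measure Ω) [IsProbabilityMeasure P]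
    (Y : Ω → E) (Yn : ℕ → Ω → E) (hY : Measurable Y) (hYn : ∀ n, Measurable (Yn n))
    (α : ℕ → ℝ) (hα : ∀ n, 0 < α n)
    (𝒟 : Set (E → ℝ))
    (h_meas : ∀ φ ∈ 𝒟, Measurable φ)
    (h_bdd : ∀ φ ∈ 𝒟, ∃ C : ℝ, ∀ x, |φ x| ≤ C)
    (h_add : ∀ φ ∈ 𝒟, ∀ χ ∈ 𝒟, φ + χ ∈ 𝒟)
    (h_smul : ∀ c : ℝ, ∀ φ ∈ 𝒟, c • φ ∈ 𝒟)
    (h_mul : ∀ φ ∈ 𝒟, ∀ χ ∈ 𝒟, φ * χ ∈ 𝒟)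
    (h_const : ∀ c : ℝ, (fun _ => c) ∈ 𝒟)
    (h_dense : ∀ f : E → ℝ, MemLp f 2 (Measure.map Y P) → ∀ ε : ℝ, 0 < ε →
      ∃ φ ∈ 𝒟, eLpNorm (f - φ) 2 (Measure.map Y P) < ENNReal.ofReal ε)
    (Atil : (E → ℝ) → (E → ℝ))
    (hAtilL2 : ∀ φ ∈ 𝒟, MemLp (Atil φ) 2 (Measure.map Y P))
    (hH3 : ∀ φ ∈ 𝒟, ∀ χ ∈ 𝒟,
      Tendsto (fun n => α n * ∫ ω, (φ (Yn n ω) - φ (Y ω)) * (χ (Yn n ω) - χ (Y ω)) ∂P)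
        atTop (𝓝 (-2 * ∫ x, Atil φ x * χ x ∂(Measure.map Y P)))) :
    ∀ φ ∈ 𝒟, ∀ χ ∈ 𝒟,
      Tendsto (fun n =>
          α n * ∫ ω, (φ (Yn n ω) - φ (Y ω)) ^ 2 * ((χ (Yn n ω) + χ (Y ω)) / 2) ∂P)
        atTop
        (𝓝 (∫ x, (Atil (φ * φ) x - 2 * φ x * Atil φ x) * χ x ∂(Measure.map Y P))) :=
  H3_square_field_operator_general P Y Yn hY hYn α 𝒟 h_meas h_bdd h_mul Atil hAtilL2 hH3
end

section
/- Let Y, Y_n (n ∈ ℕ) be measurable maps from a probability space (Ω, 𝒜, ℙ) to a measurable space (E, ℱ), P_Y the law of Y, α_n positive reals, and 𝒟 an algebra of bounded measurable real functions on E containing the constants and dense in L²(P_Y). Assume that for each φ ∈ 𝒟 there exist functions Ā[φ], A̲[φ] ∈ L²(P_Y) such that for all χ ∈ 𝒟: α_n 𝔼[(φ(Y_n) − φ(Y)) χ(Y)] → ∫ Ā[φ] χ dP_Y (hypothesis H1) and α_n 𝔼[(φ(Y) − φ(Y_n)) χ(Y_n)] → ∫ A̲[φ] χ dP_Y (hypothesis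 H2), and set Ⱥ[φ] := (Ā[φ] − A̲[φ])/2. Assume moreover there exists a real p ≥ 1 such that for all φ, ψ ∈ 𝒟, α_n 𝔼[(φ(Y_n) − φ(Y))² |ψ(Y_n) − ψ(Y)|^p] → 0. Then Ⱥ is a first order operator: for all φ, χ ∈ 𝒟, Ⱥ[φχ] = Ⱥ[φ] χ + φ Ⱥ[χ] holds P_Y-almost everywhere. -/
open MeasureTheory Filter Set
open scoped Topology ENNReal InnerProductSpace

/-!
Write `D = Ā - A̲` and `Δf = f(Yₙ) - f(Y)`. Subtracting (H2) from (H1) gives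
`αₙ 𝔼[Δφ (χ(Y) + χ(Yₙ))] → ∫ D[φ] χ dP_Y`, and adding them shows that `αₙ 𝔼[(Δφ)²]` converges.
Testing the Leibniz rule for `φχ` against `ψ`, the combination of these symmetrised increments
is exactly `αₙ 𝔼[Δφ Δχ (ψ(Y) - ψ(Yₙ))]`, which by AM-GM is at most
`αₙ 𝔼[((Δφ)² + (Δχ)²) |Δψ|] / 2`. This tends to `0`: the splitting
`|Δψ| ≤ δ + δ^(1-p) |Δψ|^p` bounds it by `δ` times the convergent second moment plus the
vanishing moment of order `p`. Hence `D[φχ] - D[φ] χ - φ D[χ]` is orthogonal in `L²(P_Y)` to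
the dense algebra `𝒟`, so it vanishes.
-/

theorem le_add_div_rpow_mul_rpow {t δ p : ℝ} (ht : 0 ≤ t) (hδ : 0 < δ) (hp : 1 ≤ p) :
    t ≤ δ + δ / δ ^ p * t ^ p := by
  rcases le_or_gt t δ with htδ | hδt
  · have : 0 ≤ δ / δ ^ p * t ^ p := by positivity
    linarith
  · have h1 : 1 ≤ t / δ := (one_le_div hδ).2 hδt.le
    calc t = δ * (t / δ) := by field_simp
      _ ≤ δ * (t / δ) ^ p := mul_le_mul_of_nonneg_left (Real.self_le_rpow_of_one_le h1 hp) hδ.le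
      _ = δ / δ ^ p * t ^ p := by rw [Real.div_rpow ht hδ.le]; ring
      _ ≤ δ + δ / δ ^ p * t ^ p := le_add_of_nonneg_left hδ.le

theorem abs_mul_mul_le_sq_add_sq (x y z : ℝ) : |x * y * z| ≤ (x ^ 2 * |z| + y ^ 2 * |z|) / 2 := by
  have h := two_mul_le_add_sq |x| |y|
  rw [sq_abs, sq_abs] at h
  rw [abs_mul, abs_mul]
  nlinarith [abs_nonneg z]

section EssentiallyBounded

variable {α E : Type*} [MeasurableSpace α] [MeasurableSpace E] {μ : Measure α}

theorem memLp_top_mul {f g : α → ℝ} (hf : MemLp f ∞ μ) (hg : MemLp g ∞ μ) :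
    MemLp (fun x => f x * g x) ∞ μ :=
  hg.mul' hf

theorem memLp_top_sq {f : α → ℝ} (hf : MemLp f ∞ μ) : MemLp (fun x => f x ^ 2) ∞ μ := by
  simpa only [sq] using memLp_top_mul hf hf

theorem memLp_top_abs_rpow {f : α → ℝ} (hf : MemLp f ∞ μ) {p : ℝ} (hp : 0 ≤ p) :
    MemLp (fun x => |f x| ^ p) ∞ μ := by
  simpa [ENNReal.toReal_ofReal hp, ENNReal.top_div_of_ne_top ENNReal.ofReal_ne_top] using
    hf.norm_rpow_div (ENNReal.ofReal p)

theorem memLp_top_comp_of_abs_le {φ : E → ℝ} (hφ : Measurable φ)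
    (hb : ∃ C, ∀ x, |φ x| ≤ C) {Z : α → E} (hZ : Measurable Z) :
    MemLp (fun x => φ (Z x)) ∞ μ := by
  obtain ⟨C, hC⟩ := hb
  exact memLp_top_of_bound (hφ.comp hZ).aestronglyMeasurable C (ae_of_all _ fun x => hC (Z x))

end EssentiallyBounded

section Increments

variable {Ω : Type*} [MeasurableSpace Ω] {P : Measure Ω} {c : ℕ → ℝ}

theorem tendsto_mul_integral_mul_abs_of_rpow {u v : ℕ → Ω → ℝ} {p L : ℝ} (hp : 1 ≤ p)
    (hc : ∀ n, 0 ≤ c n) (hu : ∀ n ω, 0 ≤ u n ω) (hu_int : ∀ n, Integrable (u n) P)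
    (huv_int : ∀ n, Integrable (fun ω => u n ω * |v n ω| ^ p) P)
    (hL : Tendsto (fun n => c n * ∫ ω, u n ω ∂P) atTop (𝓝 L))
    (h0 : Tendsto (fun n => c n * ∫ ω, u n ω * |v n ω| ^ p ∂P) atTop (𝓝 0)) :
    Tendsto (fun n => c n * ∫ ω, u n ω * |v n ω| ∂P) atTop (𝓝 0) := by
  have hbound : ∀ δ > 0, ∀ n, c n * ∫ ω, u n ω * |v n ω| ∂P
      ≤ δ * (c n * ∫ ω, u n ω ∂P) + δ / δ ^ p * (c n * ∫ ω, u n ω * |v n ω| ^ p ∂P) := by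
    intro δ hδ n
    have hpt : ∀ ω, u n ω * |v n ω| ≤ δ * u n ω + δ / δ ^ p * (u n ω * |v n ω| ^ p) := fun ω =>
      calc u n ω * |v n ω| ≤ u n ω * (δ + δ / δ ^ p * |v n ω| ^ p) :=
            mul_le_mul_of_nonneg_left (le_add_div_rpow_mul_rpow (abs_nonneg _) hδ hp) (hu n ω)
        _ = δ * u n ω + δ / δ ^ p * (u n ω * |v n ω| ^ p) := by ring
    have hint : ∫ ω, u n ω * |v n ω| ∂P
        ≤ ∫ ω, (δ * u n ω + δ / δ ^ p * (u n ω * |v n ω| ^ p)) ∂P := integral_mono_of_nonneg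
      (ae_of_all _ fun ω => mul_nonneg (hu n ω) (abs_nonneg (v n ω)))
      (((hu_int n).const_mul δ).add ((huv_int n).const_mul (δ / δ ^ p))) (ae_of_all _ hpt)
    rw [integral_add ((hu_int n).const_mul δ) ((huv_int n).const_mul _), integral_const_mul,
      integral_const_mul] at hint
    linear_combination mul_le_mul_of_nonneg_left hint (hc n)
  refine tendsto_order.2 ⟨fun a ha => Eventually.of_forall fun n => ha.trans_le ?_, fun ε hε => ?_⟩
  · exact mul_nonneg (hc n) (integral_nonneg fun ω => mul_nonneg (hu n ω) (abs_nonneg _))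
  set δ := ε / (|L| + 1)
  have hδ : 0 < δ := by positivity
  have hδL : δ * L < ε := by
    calc δ * L ≤ δ * |L| := mul_le_mul_of_nonneg_left (le_abs_self L) hδ.le
      _ < δ * (|L| + 1) := by gcongr; linarith
      _ = ε := div_mul_cancel₀ ε (by positivity)
  have hrhs : Tendsto (fun n => δ * (c n * ∫ ω, u n ω ∂P)
      + δ / δ ^ p * (c n * ∫ ω, u n ω * |v n ω| ^ p ∂P)) atTop (𝓝 (δ * L)) := by
    simpa using (hL.const_mul δ).add (h0.const_mul (δ / δ ^ p))
  filter_upwards [hrhs.eventually (gt_mem_nhds hδL)] with n hn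
  exact (hbound δ hδ n).trans_lt hn

variable [IsFiniteMeasure P]

theorem tendsto_mul_integral_sub_mul_add {u v : ℕ → Ω → ℝ} {u₀ v₀ : Ω → ℝ}
    (hu : ∀ n, MemLp (u n) ∞ P) (hu₀ : MemLp u₀ ∞ P) (hv : ∀ n, MemLp (v n) ∞ P)
    (hv₀ : MemLp v₀ ∞ P) {A B : ℝ}
    (h₁ : Tendsto (fun n => c n * ∫ ω, (u n ω - u₀ ω) * v₀ ω ∂P) atTop (𝓝 A))
    (h₂ : Tendsto (fun n => c n * ∫ ω, (u₀ ω - u n ω) * v n ω ∂P) atTop (𝓝 B)) :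
    Tendsto (fun n => c n * ∫ ω, (u n ω - u₀ ω) * (v₀ ω + v n ω) ∂P) atTop (𝓝 (A - B)) := by
  refine (h₁.sub h₂).congr fun n => ?_
  rw [← mul_sub, ← integral_sub]
  · congr 1
    exact integral_congr_ae (ae_of_all _ fun ω => by ring)
  · exact (hv₀.mul ((hu n).sub hu₀)).integrable le_top
  · exact ((hv n).mul (hu₀.sub (hu n))).integrable le_top

theorem tendsto_mul_integral_sub_sq {u : ℕ → Ω → ℝ} {u₀ : Ω → ℝ}
    (hu : ∀ n, MemLp (u n) ∞ P) (hu₀ : MemLp u₀ ∞ P) {A B : ℝ}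
    (h₁ : Tendsto (fun n => c n * ∫ ω, (u n ω - u₀ ω) * u₀ ω ∂P) atTop (𝓝 A))
    (h₂ : Tendsto (fun n => c n * ∫ ω, (u₀ ω - u n ω) * u n ω ∂P) atTop (𝓝 B)) :
    Tendsto (fun n => c n * ∫ ω, (u n ω - u₀ ω) ^ 2 ∂P) atTop (𝓝 (-B - A)) := by
  refine (h₂.neg.sub h₁).congr fun n => ?_
  rw [← mul_neg, ← mul_sub, ← integral_neg, ← integral_sub]
  · congr 1
    exact integral_congr_ae (ae_of_all _ fun ω => by ring)
  · exact (((hu n).mul (hu₀.sub (hu n))).integrable le_top).neg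
  · exact (hu₀.mul ((hu n).sub hu₀)).integrable le_top

theorem tendsto_mul_integral_sq_mul_abs {u w : ℕ → Ω → ℝ} {u₀ w₀ : Ω → ℝ} (hc : ∀ n, 0 ≤ c n)
    (hu : ∀ n, MemLp (u n) ∞ P) (hu₀ : MemLp u₀ ∞ P) (hw : ∀ n, MemLp (w n) ∞ P)
    (hw₀ : MemLp w₀ ∞ P) {A B p : ℝ} (hp : 1 ≤ p)
    (h₁ : Tendsto (fun n => c n * ∫ ω, (u n ω - u₀ ω) * u₀ ω ∂P) atTop (𝓝 A))
    (h₂ : Tendsto (fun n => c n * ∫ ω, (u₀ ω - u n ω) * u n ω ∂P) atTop (𝓝 B))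
    (hmom : Tendsto (fun n => c n * ∫ ω, (u n ω - u₀ ω) ^ 2 * |w n ω - w₀ ω| ^ p ∂P)
      atTop (𝓝 0)) :
    Tendsto (fun n => c n * ∫ ω, (u n ω - u₀ ω) ^ 2 * |w n ω - w₀ ω| ∂P) atTop (𝓝 0) :=
  tendsto_mul_integral_mul_abs_of_rpow (u := fun n ω => (u n ω - u₀ ω) ^ 2)
    (v := fun n ω => w n ω - w₀ ω) hp hc (fun n ω => sq_nonneg _)
    (fun n => (memLp_top_sq ((hu n).sub hu₀)).integrable le_top)
    (fun n => ((memLp_top_abs_rpow ((hw n).sub hw₀) (by linarith)).mul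
      (memLp_top_sq ((hu n).sub hu₀))).integrable le_top)
    (tendsto_mul_integral_sub_sq hu hu₀ h₁ h₂) hmom

variable {a b d : ℕ → Ω → ℝ} {a₀ b₀ d₀ : Ω → ℝ}

theorem tendsto_mul_integral_sub_mul_sub_mul_sub (hc : ∀ n, 0 ≤ c n)
    (ha : ∀ n, MemLp (a n) ∞ P) (ha₀ : MemLp a₀ ∞ P) (hb : ∀ n, MemLp (b n) ∞ P)
    (hb₀ : MemLp b₀ ∞ P) (hd : ∀ n, MemLp (d n) ∞ P) (hd₀ : MemLp d₀ ∞ P)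
    (ha_lim : Tendsto (fun n => c n * ∫ ω, (a n ω - a₀ ω) ^ 2 * |d n ω - d₀ ω| ∂P) atTop (𝓝 0))
    (hb_lim : Tendsto (fun n => c n * ∫ ω, (b n ω - b₀ ω) ^ 2 * |d n ω - d₀ ω| ∂P) atTop (𝓝 0)) :
    Tendsto (fun n => c n * ∫ ω, (a n ω - a₀ ω) * (b n ω - b₀ ω) * (d₀ ω - d n ω) ∂P)
      atTop (𝓝 0) := by
  refine squeeze_zero_norm (fun n => ?_) (by simpa using (ha_lim.add hb_lim).div_const 2)
  have hd_abs : MemLp (fun ω => |d n ω - d₀ ω|) ∞ P := ((hd n).sub hd₀).abs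
  have hUa : Integrable (fun ω => (a n ω - a₀ ω) ^ 2 * |d n ω - d₀ ω|) P :=
    (hd_abs.mul (memLp_top_sq ((ha n).sub ha₀))).integrable le_top
  have hUb : Integrable (fun ω => (b n ω - b₀ ω) ^ 2 * |d n ω - d₀ ω|) P :=
    (hd_abs.mul (memLp_top_sq ((hb n).sub hb₀))).integrable le_top
  have hint : ‖∫ ω, (a n ω - a₀ ω) * (b n ω - b₀ ω) * (d₀ ω - d n ω) ∂P‖
      ≤ ∫ ω, ((a n ω - a₀ ω) ^ 2 * |d n ω - d₀ ω| + (b n ω - b₀ ω) ^ 2 * |d n ω - d₀ ω|) / 2 ∂P :=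
    norm_integral_le_of_norm_le ((hUa.add hUb).div_const 2) (ae_of_all P fun ω => by
      simpa only [Real.norm_eq_abs, abs_sub_comm (d₀ ω)] using
        abs_mul_mul_le_sq_add_sq (a n ω - a₀ ω) (b n ω - b₀ ω) (d₀ ω - d n ω))
  rw [integral_div, integral_add hUa hUb] at hint
  rw [norm_mul, Real.norm_of_nonneg (hc n)]
  calc c n * ‖∫ ω, (a n ω - a₀ ω) * (b n ω - b₀ ω) * (d₀ ω - d n ω) ∂P‖
      ≤ c n * ((∫ ω, (a n ω - a₀ ω) ^ 2 * |d n ω - d₀ ω| ∂P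
        + ∫ ω, (b n ω - b₀ ω) ^ 2 * |d n ω - d₀ ω| ∂P) / 2) :=
        mul_le_mul_of_nonneg_left hint (hc n)
    _ = _ := by ring

theorem leibniz_defect_eq_zero (hc : ∀ n, 0 ≤ c n)
    (ha : ∀ n, MemLp (a n) ∞ P) (ha₀ : MemLp a₀ ∞ P) (hb : ∀ n, MemLp (b n) ∞ P)
    (hb₀ : MemLp b₀ ∞ P) (hd : ∀ n, MemLp (d n) ∞ P) (hd₀ : MemLp d₀ ∞ P) {A B C : ℝ}
    (hA : Tendsto (fun n => c n * ∫ ω, (a n ω * b n ω - a₀ ω * b₀ ω) * (d₀ ω + d n ω) ∂P)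
      atTop (𝓝 A))
    (hB : Tendsto (fun n => c n * ∫ ω, (a n ω - a₀ ω) * (b₀ ω * d₀ ω + b n ω * d n ω) ∂P)
      atTop (𝓝 B))
    (hC : Tendsto (fun n => c n * ∫ ω, (b n ω - b₀ ω) * (a₀ ω * d₀ ω + a n ω * d n ω) ∂P)
      atTop (𝓝 C))
    (ha_lim : Tendsto (fun n => c n * ∫ ω, (a n ω - a₀ ω) ^ 2 * |d n ω - d₀ ω| ∂P) atTop (𝓝 0))
    (hb_lim : Tendsto (fun n => c n * ∫ ω, (b n ω - b₀ ω) ^ 2 * |d n ω - d₀ ω| ∂P) atTop (𝓝 0)) :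
    A - B - C = 0 := by
  have hA_int : ∀ n, Integrable (fun ω => (a n ω * b n ω - a₀ ω * b₀ ω) * (d₀ ω + d n ω)) P :=
    fun n => (memLp_top_mul ((memLp_top_mul (ha n) (hb n)).sub (memLp_top_mul ha₀ hb₀))
      (hd₀.add (hd n))).integrable le_top
  have hB_int : ∀ n, Integrable (fun ω => (a n ω - a₀ ω) * (b₀ ω * d₀ ω + b n ω * d n ω)) P :=
    fun n => (memLp_top_mul ((ha n).sub ha₀)
      ((memLp_top_mul hb₀ hd₀).add (memLp_top_mul (hb n) (hd n)))).integrable le_top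
  have hC_int : ∀ n, Integrable (fun ω => (b n ω - b₀ ω) * (a₀ ω * d₀ ω + a n ω * d n ω)) P :=
    fun n => (memLp_top_mul ((hb n).sub hb₀)
      ((memLp_top_mul ha₀ hd₀).add (memLp_top_mul (ha n) (hd n)))).integrable le_top
  refine tendsto_nhds_unique ((hA.sub hB).sub hC) ((tendsto_mul_integral_sub_mul_sub_mul_sub hc
    ha ha₀ hb hb₀ hd hd₀ ha_lim hb_lim).congr fun n => ?_)
  rw [← mul_sub, ← mul_sub, ← integral_sub, ← integral_sub]
  · congr 1
    exact integral_congr_ae (ae_of_all _ fun ω => by ring)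
  · exact (hA_int n).sub (hB_int n)
  · exact hC_int n
  · exact hA_int n
  · exact hB_int n

end Increments

section WeakIdentity

variable {E : Type*} [MeasurableSpace E] {μ : Measure E}

theorem integral_leibniz_defect_mul [IsFiniteMeasure μ] {F₁ G₁ F₂ G₂ F₃ G₃ a b d : E → ℝ}
    (hF₁ : MemLp F₁ 2 μ) (hG₁ : MemLp G₁ 2 μ) (hF₂ : MemLp F₂ 2 μ) (hG₂ : MemLp G₂ 2 μ)
    (hF₃ : MemLp F₃ 2 μ) (hG₃ : MemLp G₃ 2 μ)
    (ha : MemLp a ∞ μ) (hb : MemLp b ∞ μ) (hd : MemLp d ∞ μ) :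
    ∫ x, (F₁ x - G₁ x - ((F₂ x - G₂ x) * b x + a x * (F₃ x - G₃ x))) * d x ∂μ
      = (∫ x, F₁ x * d x ∂μ - ∫ x, G₁ x * d x ∂μ)
        - (∫ x, F₂ x * (b x * d x) ∂μ - ∫ x, G₂ x * (b x * d x) ∂μ)
        - (∫ x, F₃ x * (a x * d x) ∂μ - ∫ x, G₃ x * (a x * d x) ∂μ) := by
  have hint : ∀ {F f : E → ℝ}, MemLp F 2 μ → MemLp f ∞ μ → Integrable (fun x => F x * f x) μ :=
    fun hF hf => (hF.integrable one_le_two).mul_of_top_left hf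
  have hsub : ∀ {F G f : E → ℝ}, MemLp F 2 μ → MemLp G 2 μ → MemLp f ∞ μ →
      ∫ x, F x * f x ∂μ - ∫ x, G x * f x ∂μ = ∫ x, (F x - G x) * f x ∂μ := fun hF hG hf => by
    simp_rw [sub_mul]
    exact (integral_sub (hint hF hf) (hint hG hf)).symm
  have hbd := memLp_top_mul hb hd
  have had := memLp_top_mul ha hd
  rw [hsub hF₁ hG₁ hd, hsub hF₂ hG₂ hbd, hsub hF₃ hG₃ had, ← integral_sub, ← integral_sub]
  · exact integral_congr_ae (ae_of_all _ fun x => by ring)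
  · exact (hint (hF₁.sub hG₁) hd).sub (hint (hF₂.sub hG₂) hbd)
  · exact hint (hF₃.sub hG₃) had
  · exact hint (hF₁.sub hG₁) hd
  · exact hint (hF₂.sub hG₂) hbd

theorem ae_eq_zero_of_forall_integral_mul_eq_zero {g : E → ℝ} {S : Set (E → ℝ)}
    (hg : MemLp g 2 μ) (hS : ∀ ψ ∈ S, MemLp ψ 2 μ)
    (happrox : ∀ ε : ℝ, 0 < ε → ∃ ψ ∈ S, eLpNorm (g - ψ) 2 μ < ENNReal.ofReal ε)
    (horth : ∀ ψ ∈ S, ∫ x, g x * ψ x ∂μ = 0) : g =ᵐ[μ] 0 := by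
  set G := hg.toLp g
  have hinner : ∀ ψ : S, ⟪G, (hS ψ ψ.2).toLp ψ⟫_ℝ = 0 := fun ψ => by
    rw [L2.inner_def, ← horth ψ ψ.2]
    refine integral_congr_ae ?_
    filter_upwards [hg.coeFn_toLp, (hS ψ ψ.2).coeFn_toLp] with x hgx hψx
    rw [hgx, hψx]
    simp [mul_comm]
  have hG : G ∈ closure (range fun ψ : S => (hS ψ ψ.2).toLp ψ) := by
    refine Metric.mem_closure_iff.2 fun ε hε => ?_
    obtain ⟨ψ, hψ, hlt⟩ := happrox ε hε
    refine ⟨_, ⟨⟨ψ, hψ⟩, rfl⟩, ?_⟩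
    rw [dist_eq_norm, ← MemLp.toLp_sub, Lp.norm_toLp]
    exact ENNReal.toReal_lt_of_lt_ofReal hlt
  have hGG : ⟪G, G⟫_ℝ = 0 := closure_minimal (t := {H | ⟪G, H⟫_ℝ = 0})
    (range_subset_iff.2 hinner) (isClosed_eq (continuous_const.inner continuous_id)
      continuous_const) hG
  exact hg.coeFn_toLp.symm.trans (Lp.eq_zero_iff_ae_eq_zero.1 (inner_self_eq_zero.1 hGG))

end WeakIdentity

theorem singular_bias_operator_first_order_general
    {Ω E : Type*} [MeasurableSpace Ω] [MeasurableSpace E]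
    (P : Measure Ω) [IsProbabilityMeasure P]
    (Y : Ω → E) (Yn : ℕ → Ω → E) (hY : Measurable Y) (hYn : ∀ n, Measurable (Yn n))
    (α : ℕ → ℝ) (hα : ∀ n, 0 < α n)
    (𝒟 : Set (E → ℝ))
    (h_meas : ∀ φ ∈ 𝒟, Measurable φ)
    (h_bdd : ∀ φ ∈ 𝒟, ∃ C : ℝ, ∀ x, |φ x| ≤ C)
    (h_mul : ∀ φ ∈ 𝒟, ∀ χ ∈ 𝒟, φ * χ ∈ 𝒟)
    (h_dense : ∀ f : E → ℝ, MemLp f 2 (Measure.map Y P) → ∀ ε : ℝ, 0 < ε →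
      ∃ φ ∈ 𝒟, eLpNorm (f - φ) 2 (Measure.map Y P) < ENNReal.ofReal ε)
    (Abar Alow : (E → ℝ) → (E → ℝ))
    (hAbarL2 : ∀ φ ∈ 𝒟, MemLp (Abar φ) 2 (Measure.map Y P))
    (hAlowL2 : ∀ φ ∈ 𝒟, MemLp (Alow φ) 2 (Measure.map Y P))
    (hH1 : ∀ φ ∈ 𝒟, ∀ χ ∈ 𝒟,
      Tendsto (fun n => α n * ∫ ω, (φ (Yn n ω) - φ (Y ω)) * χ (Y ω) ∂P)
        atTop (𝓝 (∫ x, Abar φ x * χ x ∂(Measure.map Y P))))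
    (hH2 : ∀ φ ∈ 𝒟, ∀ χ ∈ 𝒟,
      Tendsto (fun n => α n * ∫ ω, (φ (Y ω) - φ (Yn n ω)) * χ (Yn n ω) ∂P)
        atTop (𝓝 (∫ x, Alow φ x * χ x ∂(Measure.map Y P))))
    (p : ℝ) (hp : 1 ≤ p)
    (hmom : ∀ φ ∈ 𝒟, ∀ ψ ∈ 𝒟,
      Tendsto (fun n => α n * ∫ ω, (φ (Yn n ω) - φ (Y ω)) ^ 2 * |ψ (Yn n ω) - ψ (Y ω)| ^ p ∂P)
        atTop (𝓝 0)) :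
    ∀ φ ∈ 𝒟, ∀ χ ∈ 𝒟,
      ∀ᵐ x ∂(Measure.map Y P),
        (Abar (φ * χ) x - Alow (φ * χ) x) / 2 =
          (Abar φ x - Alow φ x) / 2 * χ x + φ x * ((Abar χ x - Alow χ x) / 2) := by
  intro φ hφ χ hχ
  set μ := Measure.map Y P
  have hc : ∀ n, 0 ≤ α n := fun n => (hα n).le
  have hseq : ∀ f ∈ 𝒟, ∀ n, MemLp (fun ω => f (Yn n ω)) ∞ P :=
    fun f hf n => memLp_top_comp_of_abs_le (h_meas f hf) (h_bdd f hf) (hYn n)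
  have hlim : ∀ f ∈ 𝒟, MemLp (fun ω => f (Y ω)) ∞ P :=
    fun f hf => memLp_top_comp_of_abs_le (h_meas f hf) (h_bdd f hf) hY
  have hbdd : ∀ f ∈ 𝒟, MemLp f ∞ μ :=
    fun f hf => memLp_top_comp_of_abs_le (h_meas f hf) (h_bdd f hf) measurable_id
  have hsym : ∀ f ∈ 𝒟, ∀ g ∈ 𝒟, Tendsto
      (fun n => α n * ∫ ω, (f (Yn n ω) - f (Y ω)) * (g (Y ω) + g (Yn n ω)) ∂P)
      atTop (𝓝 (∫ x, Abar f x * g x ∂μ - ∫ x, Alow f x * g x ∂μ)) := fun f hf g hg =>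
    tendsto_mul_integral_sub_mul_add (hseq f hf) (hlim f hf) (hseq g hg) (hlim g hg)
      (hH1 f hf g hg) (hH2 f hf g hg)
  have hsmall : ∀ f ∈ 𝒟, ∀ g ∈ 𝒟, Tendsto
      (fun n => α n * ∫ ω, (f (Yn n ω) - f (Y ω)) ^ 2 * |g (Yn n ω) - g (Y ω)| ∂P)
      atTop (𝓝 0) := fun f hf g hg =>
    tendsto_mul_integral_sq_mul_abs hc (hseq f hf) (hlim f hf) (hseq g hg) (hlim g hg) hp
      (hH1 f hf f hf) (hH2 f hf f hf) (hmom f hf g hg)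
  have hφχ := h_mul φ hφ χ hχ
  have horth : ∀ ψ ∈ 𝒟, ∫ x, (Abar (φ * χ) x - Alow (φ * χ) x
      - ((Abar φ x - Alow φ x) * χ x + φ x * (Abar χ x - Alow χ x))) * ψ x ∂μ = 0 := by
    intro ψ hψ
    rw [integral_leibniz_defect_mul (hAbarL2 _ hφχ) (hAlowL2 _ hφχ) (hAbarL2 φ hφ)
      (hAlowL2 φ hφ) (hAbarL2 χ hχ) (hAlowL2 χ hχ) (hbdd φ hφ) (hbdd χ hχ) (hbdd ψ hψ)]
    exact leibniz_defect_eq_zero hc (hseq φ hφ) (hlim φ hφ) (hseq χ hχ) (hlim χ hχ) (hseq ψ hψ)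
      (hlim ψ hψ) (hsym _ hφχ ψ hψ) (hsym φ hφ _ (h_mul χ hχ ψ hψ))
      (hsym χ hχ _ (h_mul φ hφ ψ hψ)) (hsmall φ hφ ψ hψ) (hsmall χ hχ ψ hψ)
  have hG : MemLp (fun x => Abar (φ * χ) x - Alow (φ * χ) x
      - ((Abar φ x - Alow φ x) * χ x + φ x * (Abar χ x - Alow χ x))) 2 μ :=
    ((hAbarL2 _ hφχ).sub (hAlowL2 _ hφχ)).sub
      (((hbdd χ hχ).mul' ((hAbarL2 φ hφ).sub (hAlowL2 φ hφ))).add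
        (((hAbarL2 χ hχ).sub (hAlowL2 χ hχ)).mul' (hbdd φ hφ)))
  filter_upwards [ae_eq_zero_of_forall_integral_mul_eq_zero hG
    (fun ψ hψ => (hbdd ψ hψ).mono_exponent le_top) (h_dense _ hG) horth] with x hx
  linear_combination (hx.trans (Pi.zero_apply x)) / 2

/-- Under hypotheses (H1) and (H2) on an algebra `𝒟` of bounded measurable
functions dense in `L²(P_Y)`, if moreover there is a real `p ≥ 1` such that
`α_n 𝔼[(φ(Y_n) − φ(Y))² |ψ(Y_n) − ψ(Y)|^p] → 0` for all `φ, ψ ∈ 𝒟`, then the singular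
bias operator `Ⱥ = (Ā − A̲)/2` is first order: `Ⱥ[φχ] = Ⱥ[φ]χ + φⱤ[χ]` `P_Y`-a.e. -/
theorem singular_bias_operator_first_order
    {Ω E : Type*} [MeasurableSpace Ω] [MeasurableSpace E]
    (P : Measure Ω) [IsProbabilityMeasure P]
    (Y : Ω → E) (Yn : ℕ → Ω → E) (hY : Measurable Y) (hYn : ∀ n, Measurable (Yn n))
    (α : ℕ → ℝ) (hα : ∀ n, 0 < α n)
    (𝒟 : Set (E → ℝ))
    (h_meas : ∀ φ ∈ 𝒟, Measurable φ)
    (h_bdd : ∀ φ ∈ 𝒟, ∃ C : ℝ, ∀ x, |φ x| ≤ C)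
    (h_add : ∀ φ ∈ 𝒟, ∀ χ ∈ 𝒟, φ + χ ∈ 𝒟)
    (h_smul : ∀ c : ℝ, ∀ φ ∈ 𝒟, c • φ ∈ 𝒟)
    (h_mul : ∀ φ ∈ 𝒟, ∀ χ ∈ 𝒟, φ * χ ∈ 𝒟)
    (h_const : ∀ c : ℝ, (fun _ => c) ∈ 𝒟)
    (h_dense : ∀ f : E → ℝ, MemLp f 2 (Measure.map Y P) → ∀ ε : ℝ, 0 < ε →
      ∃ φ ∈ 𝒟, eLpNorm (f - φ) 2 (Measure.map Y P) < ENNReal.ofReal ε)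
    (Abar Alow : (E → ℝ) → (E → ℝ))
    (hAbarL2 : ∀ φ ∈ 𝒟, MemLp (Abar φ) 2 (Measure.map Y P))
    (hAlowL2 : ∀ φ ∈ 𝒟, MemLp (Alow φ) 2 (Measure.map Y P))
    (hH1 : ∀ φ ∈ 𝒟, ∀ χ ∈ 𝒟,
      Tendsto (fun n => α n * ∫ ω, (φ (Yn n ω) - φ (Y ω)) * χ (Y ω) ∂P)
        atTop (𝓝 (∫ x, Abar φ x * χ x ∂(Measure.map Y P))))
    (hH2 : ∀ φ ∈ 𝒟, ∀ χ ∈ 𝒟,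
      Tendsto (fun n => α n * ∫ ω, (φ (Y ω) - φ (Yn n ω)) * χ (Yn n ω) ∂P)
        atTop (𝓝 (∫ x, Alow φ x * χ x ∂(Measure.map Y P))))
    (p : ℝ) (hp : 1 ≤ p)
    (hmom : ∀ φ ∈ 𝒟, ∀ ψ ∈ 𝒟,
      Tendsto (fun n => α n * ∫ ω, (φ (Yn n ω) - φ (Y ω)) ^ 2 * |ψ (Yn n ω) - ψ (Y ω)| ^ p ∂P)
        atTop (𝓝 0)) :
    ∀ φ ∈ 𝒟, ∀ χ ∈ 𝒟,
      ∀ᵐ x ∂(Measure.map Y P),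
        (Abar (φ * χ) x - Alow (φ * χ) x) / 2 =
          (Abar φ x - Alow φ x) / 2 * χ x + φ x * ((Abar χ x - Alow χ x) / 2) :=
  singular_bias_operator_first_order_general P Y Yn hY hYn α hα 𝒟 h_meas h_bdd h_mul h_dense Abar
    Alow hAbarL2 hAlowL2 hH1 hH2 p hp hmom
end

section
/- Let Y be uniformly distributed on [0,1] and set Y_n := Y − {2ⁿY}/2^{n+1}, the approximation of Y obtained by halving all dyadic digits of Y beyond the n-th. Then for all integers k, l, lim_{n→∞} 3·4ⁿ 𝔼[ (e^{2πik Y_n} − e^{2πik Y}) ( e^{−2πil Y_n} − e^{−2πil Y} ) ] = π² k l · 1_{{k = l}}; in particular the deterministic approximation Y_n of Y generates a non-zero limit quadratic form on trigonometric polynomials although Y_n is a function of Y and Y is a function of Y_n. -/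
open MeasureTheory Filter Set
open scoped Topology

/-!
With `t = {2ⁿy}` the integrand factors as `e^{2πi(k-l)y} · Hₙ(t)`, where
`Hₙ(t) = (e^{-2πikt/2^{n+1}} - 1)(e^{2πilt/2^{n+1}} - 1)`.
If `k ≠ l`, its integral over `[0,1]` vanishes once `2ⁿ > |k - l|`: translating `y` by `2⁻ⁿ`
leaves `{2ⁿy}` unchanged and multiplies the character by the root of unity `e^{2πi(k-l)/2ⁿ} ≠ 1`.
If `k = l`, `{2ⁿY}` is again uniform, so the integral is `∫₀¹ Hₙ = ∫₀¹ 4 sin²(πkt/2^{n+1}) dt`,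
and `3·4ⁿ` times it tends to `∫₀¹ 3π²k²t² dt = π²k²`.
-/

open Complex
open scoped Real ComplexConjugate

theorem exp_sub_exp_mul_exp_neg_sub_exp_neg (a b y u : ℂ) :
    (exp (a * (y - u)) - exp (a * y)) * (exp (-(b * (y - u))) - exp (-(b * y))) =
      exp ((a - b) * y) * ((exp (-(a * u)) - 1) * (exp (b * u) - 1)) := by
  rw [show a * (y - u) = a * y + -(a * u) by ring, show -(b * (y - u)) = -(b * y) + b * u by ring,
    show (a - b) * y = a * y + -(b * y) by ring, exp_add, exp_add, exp_add]
  ring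

theorem integral_comp_eq_intervalIntegral_of_map_eq_restrict_Icc {Ω E : Type*}
    [MeasurableSpace Ω] [NormedAddCommGroup E] [NormedSpace ℝ E] {P : Measure Ω} {Y : Ω → ℝ}
    (hY : P.map Y = volume.restrict (Icc 0 1)) {f : ℝ → E}
    (hf : AEStronglyMeasurable f (volume.restrict (Icc 0 1))) :
    ∫ ω, f (Y ω) ∂P = ∫ y in 0..1, f y := by
  have hYm : AEMeasurable Y P := aemeasurable_of_map_neZero ⟨by simp [hY]⟩
  rw [← integral_map hYm (hY ▸ hf), hY, integral_Icc_eq_integral_Ioc,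
    intervalIntegral.integral_of_le zero_le_one]

theorem Function.Periodic.intervalIntegral_eq_zero_of_add_eq_smul {E : Type*}
    [NormedAddCommGroup E] [NormedSpace ℂ E] {G : ℝ → E} {T a : ℝ} {c : ℂ}
    (hG : Function.Periodic G T) (hc : c ≠ 1) (hshift : ∀ y, G (y + a) = c • G y) :
    ∫ y in 0..T, G y = 0 := by
  have hinv : ∫ y in 0..T, G y = c • ∫ y in 0..T, G y := by
    calc ∫ y in 0..T, G y = ∫ y in a..a + T, G y := by
          simpa using hG.intervalIntegral_add_eq 0 a
      _ = ∫ y in 0..T, G (y + a) := by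
          rw [intervalIntegral.integral_comp_add_right, zero_add, add_comm]
      _ = c • ∫ y in 0..T, G y := by
          simp_rw [hshift, intervalIntegral.integral_smul]
  have : (1 - c) • ∫ y in 0..T, G y = 0 := by rw [sub_smul, one_smul, ← hinv, sub_self]
  exact (smul_eq_zero.mp this).resolve_left (sub_ne_zero.mpr hc.symm)

theorem Complex.exp_two_pi_I_mul_div_ne_one {m : ℤ} {N : ℕ} (hm : m ≠ 0) (hmN : m.natAbs < N) :
    exp (2 * π * I * m / N) ≠ 1 := by
  have hN : N ≠ 0 := by omega
  rw [show 2 * π * I * m / N = m * (2 * π * I / N) by ring, exp_int_mul, Ne,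
    (isPrimitiveRoot_exp N hN).zpow_eq_one_iff_dvd]
  intro hdvd
  exact hm (Int.eq_zero_of_dvd_of_natAbs_lt_natAbs hdvd (by simpa using hmN))

theorem intervalIntegral_exp_smul_comp_fract_mul_eq_zero {E : Type*} [NormedAddCommGroup E]
    [NormedSpace ℂ E] (F : ℝ → E) {m : ℤ} {N : ℕ} (hm : m ≠ 0) (hmN : m.natAbs < N) :
    ∫ y in 0..1, exp (2 * π * I * m * y) • F (Int.fract (N * y)) = 0 := by
  have hN : (N : ℝ) ≠ 0 := by norm_cast; omega
  refine Function.Periodic.intervalIntegral_eq_zero_of_add_eq_smul (a := (N : ℝ)⁻¹)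
    (fun y => ?_) (exp_two_pi_I_mul_div_ne_one hm hmN) (fun y => ?_)
  · have : exp (2 * π * I * m * ↑(y + 1)) = exp (2 * π * I * m * y) := by
      rw [ofReal_add, ofReal_one, mul_add, mul_one, exp_add, mul_comm _ (m : ℂ),
        exp_int_mul_two_pi_mul_I, mul_one]
    rw [this, mul_add, mul_one, Int.fract_add_natCast]
  · rw [smul_smul, ← exp_add, mul_add, mul_inv_cancel₀ hN, Int.fract_add_one]
    congr 3
    push_cast
    ring

theorem intervalIntegral_comp_fract_mul {E : Type*} [NormedAddCommGroup E] [NormedSpace ℝ E]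
    {H : ℝ → E} (hH : IntervalIntegrable H volume 0 1) {N : ℕ} (hN : N ≠ 0) :
    ∫ y in 0..1, H (Int.fract (N * y)) = ∫ x in 0..1, H x := by
  set F : ℝ → E := H ∘ Int.fract
  have hF : Function.Periodic F 1 := (Int.fract_periodic ℝ).comp H
  have hFH : EqOn F H (Ico 0 1) := fun x hx => congrArg H (Int.fract_eq_self.mpr hx)
  have hFint : IntervalIntegrable F volume 0 1 := by
    rw [intervalIntegrable_iff_integrableOn_Ioc_of_le zero_le_one,
      ← integrableOn_Icc_iff_integrableOn_Ioc, integrableOn_Icc_iff_integrableOn_Ico,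
      integrableOn_congr_fun hFH measurableSet_Ico, ← integrableOn_Icc_iff_integrableOn_Ico,
      integrableOn_Icc_iff_integrableOn_Ioc]
    exact hH.1
  have hperiod : ∫ x in 0..1, F x = ∫ x in 0..1, H x := by
    rw [intervalIntegral.integral_of_le zero_le_one, intervalIntegral.integral_of_le zero_le_one,
      ← integral_Icc_eq_integral_Ioc, integral_Icc_eq_integral_Ico,
      setIntegral_congr_fun measurableSet_Ico hFH, ← integral_Icc_eq_integral_Ico,
      integral_Icc_eq_integral_Ioc]
  have hmul : ∫ x in 0..(N : ℝ), F x = N • ∫ x in 0..1, F x := by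
    simpa using hF.intervalIntegral_add_zsmul_eq N 0 (hF.intervalIntegrable₀ one_ne_zero hFint)
  have hN' : (N : ℝ) ≠ 0 := Nat.cast_ne_zero.mpr hN
  calc ∫ y in 0..1, H (Int.fract (N * y)) = ∫ y in 0..1, F (N * y) := rfl
    _ = ∫ x in 0..1, H x := by
      rw [intervalIntegral.integral_comp_mul_left _ hN', mul_zero, mul_one, hmul, hperiod,
        ← Nat.cast_smul_eq_nsmul ℝ, smul_smul, inv_mul_cancel₀ hN', one_smul]

theorem Complex.exp_neg_I_mul_sub_one_mul_exp_I_mul_sub_one (θ : ℝ) :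
    (exp (-(I * θ)) - 1) * (exp (I * θ) - 1) = ((2 * Real.sin (θ / 2)) ^ 2 : ℝ) := by
  have hconj : exp (-(I * θ)) - 1 = conj (exp (I * θ) - 1) := by
    rw [map_sub, map_one, ← exp_conj, map_mul, conj_I, conj_ofReal, neg_mul]
  rw [hconj, mul_comm, mul_conj', norm_exp_I_mul_ofReal_sub_one, Real.norm_eq_abs,
    ← ofReal_pow, sq_abs]

theorem Real.mul_sin_div_eq_mul_sinc {c : ℝ} (hc : c ≠ 0) (x : ℝ) :
    c * Real.sin (x / c) = x * Real.sinc (x / c) := by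
  rcases eq_or_ne x 0 with rfl | hx
  · simp
  rw [Real.sinc_of_ne_zero (div_ne_zero hx hc)]
  field_simp

theorem tendsto_four_pow_mul_intervalIntegral_exp_sub_one_mul (c : ℝ) :
    Tendsto (fun n : ℕ => ((3 * 4 ^ n : ℝ) : ℂ) * ∫ t in (0 : ℝ)..1,
        (exp (-(2 * π * I * c * (t / 2 ^ (n + 1)))) - 1) *
          (exp (2 * π * I * c * (t / 2 ^ (n + 1))) - 1))
      atTop (𝓝 ((π : ℂ) ^ 2 * c ^ 2)) := by
  set Φ : ℝ → ℝ := fun s => ∫ t in (0 : ℝ)..1, 3 * (π * c * t * Real.sinc (s * (π * c * t))) ^ 2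
  have hΦ : Continuous Φ := by fun_prop
  have hΦ0 : Φ 0 = π ^ 2 * c ^ 2 := by
    simp [Φ, mul_pow, integral_pow]
    ring
  have hpt : ∀ (n : ℕ) (t : ℝ), ((3 * 4 ^ n : ℝ) : ℂ) *
      ((exp (-(2 * π * I * c * (t / 2 ^ (n + 1)))) - 1) *
        (exp (2 * π * I * c * (t / 2 ^ (n + 1))) - 1)) =
      ((3 * (π * c * t * Real.sinc ((2 ^ (n + 1))⁻¹ * (π * c * t))) ^ 2 : ℝ) : ℂ) := by
    intro n t
    have h2 : (2 : ℝ) ^ (n + 1) ≠ 0 := by positivity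
    rw [show 2 * π * I * c * (t / 2 ^ (n + 1)) = I * ↑(2 * π * c * t / 2 ^ (n + 1)) by
        push_cast; ring, exp_neg_I_mul_sub_one_mul_exp_I_mul_sub_one, ← ofReal_mul]
    congr 1
    have hsinc := Real.mul_sin_div_eq_mul_sinc h2 (π * c * t)
    rw [div_eq_inv_mul] at hsinc
    rw [← hsinc, show 2 * π * c * t / 2 ^ (n + 1) / 2 = (2 ^ (n + 1))⁻¹ * (π * c * t) by ring,
      show (4 : ℝ) ^ n = (2 ^ n) ^ 2 by rw [← pow_mul, mul_comm, pow_mul]; norm_num]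
    ring_nf
  have hs : Tendsto (fun n : ℕ => ((2 : ℝ) ^ (n + 1))⁻¹) atTop (𝓝 0) :=
    (tendsto_inv_atTop_zero.comp (tendsto_pow_atTop_atTop_of_one_lt one_lt_two)).comp
      (tendsto_add_atTop_nat 1)
  have hlim := (continuous_ofReal.tendsto _).comp ((hΦ.tendsto 0).comp hs)
  rw [hΦ0] at hlim
  push_cast at hlim
  refine hlim.congr fun n => ?_
  rw [← intervalIntegral.integral_const_mul]
  simp only [hpt]
  exact intervalIntegral.integral_ofReal.symm

theorem dyadic_halving_limit_quadratic_form_general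
    {Ω : Type*} [MeasurableSpace Ω] (P : Measure Ω)
    (Y : Ω → ℝ)
    (hunif : Measure.map Y P = volume.restrict (Icc (0:ℝ) 1)) :
    ∀ k l : ℤ,
      Tendsto (fun n : ℕ =>
          ((3 * 4 ^ n : ℝ) : ℂ) *
            ∫ ω,
              (Complex.exp (2 * Real.pi * Complex.I * k *
                  (Y ω - Int.fract (2 ^ n * Y ω) / 2 ^ (n + 1))) -
                Complex.exp (2 * Real.pi * Complex.I * k * Y ω)) *
              (Complex.exp (-(2 * Real.pi * Complex.I * l *
                  (Y ω - Int.fract (2 ^ n * Y ω) / 2 ^ (n + 1)))) -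
                Complex.exp (-(2 * Real.pi * Complex.I * l * Y ω))) ∂P)
        atTop
        (𝓝 ((Real.pi : ℂ) ^ 2 * (k : ℂ) * (l : ℂ) * (if k = l then 1 else 0))) := by
  intro k l
  set H : ℕ → ℝ → ℂ := fun n t => (exp (-(2 * π * I * k * (t / 2 ^ (n + 1)))) - 1) *
    (exp (2 * π * I * l * (t / 2 ^ (n + 1))) - 1)
  set G : ℕ → ℝ → ℂ := fun n y =>
    exp (2 * π * I * (k - l : ℤ) * y) • H n (Int.fract ((2 ^ n : ℕ) * y))
  have hG : ∀ n, Measurable (G n) := fun n => by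
    have hfract : Measurable (Int.fract : ℝ → ℝ) := measurable_fract
    fun_prop
  refine Tendsto.congr (f₁ := fun n => ((3 * 4 ^ n : ℝ) : ℂ) * ∫ y in 0..1, G n y)
    (fun n => ?_) ?_
  · rw [← integral_comp_eq_intervalIntegral_of_map_eq_restrict_Icc hunif
      (hG n).aestronglyMeasurable]
    congr 2 with ω
    simp only [G, H, exp_sub_exp_mul_exp_neg_sub_exp_neg, smul_eq_mul]
    push_cast
    ring_nf
  rcases eq_or_ne k l with rfl | hkl
  · have hGH : ∀ n, ∫ y in 0..1, G n y = ∫ t in 0..1, H n t := fun n => by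
      simp only [G, sub_self, Int.cast_zero, mul_zero, zero_mul, exp_zero, one_smul]
      have hH : Continuous (H n) := by fun_prop
      exact intervalIntegral_comp_fract_mul (hH.intervalIntegrable 0 1) (by positivity)
    simp only [hGH, if_true, mul_one]
    convert tendsto_four_pow_mul_intervalIntegral_exp_sub_one_mul k using 2 <;> push_cast <;> ring
  · simp only [if_neg hkl, mul_zero]
    refine tendsto_const_nhds.congr' ?_
    filter_upwards [eventually_gt_atTop (k - l).natAbs] with n hn
    rw [intervalIntegral_exp_smul_comp_fract_mul_eq_zero _ (sub_ne_zero.mpr hkl)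
      (hn.trans Nat.lt_two_pow_self), mul_zero]

/-- If `Y` is uniform on `[0,1]` and `Y_n = Y − {2ⁿY}/2^{n+1}` (halving all
dyadic digits of `Y` beyond the `n`-th), then for all integers `k, l`,
`3·4ⁿ 𝔼[(e^{2πikY_n} − e^{2πikY})(e^{−2πilY_n} − e^{−2πilY})] → π²kl·1_{k=l}`. -/
theorem dyadic_halving_limit_quadratic_form
    {Ω : Type*} [MeasurableSpace Ω] (P : Measure Ω) [IsProbabilityMeasure P]
    (Y : Ω → ℝ) (hY : Measurable Y)
    (hunif : Measure.map Y P = volume.restrict (Icc (0:ℝ) 1)) :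
    ∀ k l : ℤ,
      Tendsto (fun n : ℕ =>
          ((3 * 4 ^ n : ℝ) : ℂ) *
            ∫ ω,
              (Complex.exp (2 * Real.pi * Complex.I * k *
                  (Y ω - Int.fract (2 ^ n * Y ω) / 2 ^ (n + 1))) -
                Complex.exp (2 * Real.pi * Complex.I * k * Y ω)) *
              (Complex.exp (-(2 * Real.pi * Complex.I * l *
                  (Y ω - Int.fract (2 ^ n * Y ω) / 2 ^ (n + 1)))) -
                Complex.exp (-(2 * Real.pi * Complex.I * l * Y ω))) ∂P)
        atTop
        (𝓝 ((Real.pi : ℂ) ^ 2 * (k : ℂ) * (l : ℂ) * (if k = l then 1 else 0))) :=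
  dyadic_halving_limit_quadratic_form_general P Y hunif
end

section
/- Let Y be a real random variable whose law P_Y is Rajchman, and let Y_n^{(d)} := ⌊nY⌋/n be the approximation of Y by default (rounding down to the graduation of mesh 1/n). Then n(Y_n^{(d)} − Y) = −{nY} converges in distribution, as n → ∞, to −U where U is uniformly distributed on (0,1), and 𝔼[ n(Y_n^{(d)} − Y) ] → −1/2. -/
/-!
Since the law of `Y` is Rajchman, the Fourier coefficients `𝔼 e^{2πik nY} = φ_Y(2πkn)` of `nY`
mod 1 tend to those of the Haar measure of `ℝ/ℤ`; as trigonometric polynomials are uniformly dense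
in `C(ℝ/ℤ)`, `nY` mod 1 becomes equidistributed (Weyl's criterion). For continuous `g`, the function
`g ∘ fract` is continuous on `ℝ/ℤ` except at the null point `0`, so squeezing it between continuous
functions gives `𝔼 g({nY}) → ∫₀¹ g`. Finally `n(⌊nY⌋/n − Y) = −{nY}`, and `g = id` gives the mean.
-/

open MeasureTheory Filter Set
open scoped Topology Real

section CompactSpace

variable {X : Type*} [TopologicalSpace X] [CompactSpace X] [MeasurableSpace X]
  [OpensMeasurableSpace X]

theorem ContinuousMap.integrable {E : Type*} [NormedAddCommGroup E] (f : C(X, E))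
    (μ : Measure X) [IsFiniteMeasure μ] : Integrable f μ :=
  f.continuous.integrable_of_hasCompactSupport (.of_compactSpace _)

theorem ContinuousMap.lipschitzWith_integral {E : Type*} [NormedAddCommGroup E] [NormedSpace ℝ E]
    (μ : Measure X) [IsFiniteMeasure μ] :
    LipschitzWith (μ.real univ).toNNReal (fun f : C(X, E) => ∫ x, f x ∂μ) := by
  refine LipschitzWith.of_dist_le_mul fun f g => ?_
  rw [Real.coe_toNNReal _ measureReal_nonneg, dist_eq_norm,
    ← integral_sub (f.integrable μ) (g.integrable μ), mul_comm]
  refine norm_integral_le_of_norm_le_const (ae_of_all _ fun x => ?_)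
  rw [dist_eq_norm]
  exact (f - g).norm_coe_le_norm x

theorem tendsto_integral_of_continuous_squeeze {ι : Type*} {l : Filter ι} {μ : ι → Measure X}
    [∀ i, IsFiniteMeasure (μ i)] {ν : Measure X} [IsFiniteMeasure ν]
    (hμ : ∀ h : C(X, ℝ), Tendsto (fun i => ∫ x, h x ∂μ i) l (𝓝 (∫ x, h x ∂ν)))
    {F : X → ℝ} (hF : Measurable F) {C : ℝ} (A B : ℕ → C(X, ℝ))
    (hAF : ∀ m x, A m x ≤ F x) (hFB : ∀ m x, F x ≤ B m x)
    (hAC : ∀ m x, |A m x| ≤ C) (hBC : ∀ m x, |B m x| ≤ C)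
    (hA : ∀ᵐ x ∂ν, Tendsto (fun m => A m x) atTop (𝓝 (F x)))
    (hB : ∀ᵐ x ∂ν, Tendsto (fun m => B m x) atTop (𝓝 (F x))) :
    Tendsto (fun i => ∫ x, F x ∂μ i) l (𝓝 (∫ x, F x ∂ν)) := by
  have hF_int (ρ : Measure X) [IsFiniteMeasure ρ] : Integrable F ρ :=
    (integrable_const C).mono' hF.aestronglyMeasurable (ae_of_all _ fun x =>
      abs_le.2 ⟨(abs_le.1 (hAC 0 x)).1.trans (hAF 0 x), (hFB 0 x).trans (abs_le.1 (hBC 0 x)).2⟩)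
  have hA_lim : Tendsto (fun m => ∫ x, A m x ∂ν) atTop (𝓝 (∫ x, F x ∂ν)) :=
    tendsto_integral_of_dominated_convergence (fun _ => C)
      (fun m => (A m).continuous.aestronglyMeasurable) (integrable_const C)
      (fun m => ae_of_all _ (hAC m)) hA
  have hB_lim : Tendsto (fun m => ∫ x, B m x ∂ν) atTop (𝓝 (∫ x, F x ∂ν)) :=
    tendsto_integral_of_dominated_convergence (fun _ => C)
      (fun m => (B m).continuous.aestronglyMeasurable) (integrable_const C)
      (fun m => ae_of_all _ (hBC m)) hB
  refine tendsto_order.2 ⟨fun a ha => ?_, fun b hb => ?_⟩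
  · obtain ⟨m, hm⟩ := (hA_lim.eventually (lt_mem_nhds ha)).exists
    filter_upwards [(hμ (A m)).eventually (lt_mem_nhds hm)] with i hi
    exact hi.trans_le (integral_mono ((A m).integrable _) (hF_int _) (hAF m))
  · obtain ⟨m, hm⟩ := (hB_lim.eventually (gt_mem_nhds hb)).exists
    filter_upwards [(hμ (B m)).eventually (gt_mem_nhds hm)] with i hi
    exact (integral_mono (hF_int _) ((B m).integrable _) (hFB m)).trans_lt hi

end CompactSpace

namespace AddCircle

variable {T : ℝ} [Fact (0 < T)]

theorem integral_fourier_eq_zero (μ : Measure (AddCircle T)) [μ.IsAddRightInvariant] {k : ℤ}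
    (hk : k ≠ 0) : ∫ z, fourier k z ∂μ = 0 :=
  integral_eq_zero_of_add_right_eq_neg (fourier_add_half_inv_index hk Fact.out)

theorem tendsto_integral_of_tendsto_integral_fourier {ι : Type*} {l : Filter ι}
    {μ : ι → Measure (AddCircle T)} [∀ i, IsProbabilityMeasure (μ i)]
    {ν : Measure (AddCircle T)} [IsFiniteMeasure ν]
    (h : ∀ k : ℤ, Tendsto (fun i => ∫ z, fourier k z ∂μ i) l (𝓝 (∫ z, fourier k z ∂ν)))
    (H : C(AddCircle T, ℂ)) :
    Tendsto (fun i => ∫ z, H z ∂μ i) l (𝓝 (∫ z, H z ∂ν)) := by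
  let S : Submodule ℂ C(AddCircle T, ℂ) :=
    { carrier := {H | Tendsto (fun i => ∫ z, H z ∂μ i) l (𝓝 (∫ z, H z ∂ν))}
      add_mem' := fun {F G} hF hG => by
        simp only [mem_ofPred_eq, ContinuousMap.add_apply,
          integral_add (F.integrable _) (G.integrable _)]
        exact hF.add hG
      zero_mem' := by simpa using tendsto_const_nhds
      smul_mem' := fun c F hF => by
        simp only [mem_ofPred_eq, ContinuousMap.smul_apply, integral_smul]
        exact hF.const_smul c }
  have hS : IsClosed (S : Set C(AddCircle T, ℂ)) := by
    have hequi : UniformEquicontinuous fun i (F : C(AddCircle T, ℂ)) => ∫ z, F z ∂μ i :=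
      LipschitzWith.uniformEquicontinuous _ 1 fun i => by
        simpa using ContinuousMap.lipschitzWith_integral (E := ℂ) (μ i)
    exact hequi.equicontinuous.isClosed_setOfPred_tendsto
      (ContinuousMap.lipschitzWith_integral ν).continuous
  have hspan : Submodule.span ℂ (range (fourier (T := T))) ≤ S :=
    Submodule.span_le.2 (range_subset_iff.2 h)
  have hclosure := Submodule.topologicalClosure_minimal _ hspan hS
  rw [span_fourier_closure_eq_top] at hclosure
  exact hclosure (Submodule.mem_top (x := H))

theorem tendsto_integral_real_of_tendsto_integral_fourier {ι : Type*} {l : Filter ι}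
    {μ : ι → Measure (AddCircle T)} [∀ i, IsProbabilityMeasure (μ i)]
    {ν : Measure (AddCircle T)} [IsFiniteMeasure ν]
    (h : ∀ k : ℤ, Tendsto (fun i => ∫ z, fourier k z ∂μ i) l (𝓝 (∫ z, fourier k z ∂ν)))
    (H : C(AddCircle T, ℝ)) :
    Tendsto (fun i => ∫ z, H z ∂μ i) l (𝓝 (∫ z, H z ∂ν)) := by
  have := tendsto_integral_of_tendsto_integral_fourier h
    ((⟨Complex.ofReal, Complex.continuous_ofReal⟩ : C(ℝ, ℂ)).comp H)
  simpa [integral_complex_ofReal, Function.comp_def] using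
    (Complex.continuous_re.tendsto _).comp this

end AddCircle

def endpointBump (m : ℕ) (x : ℝ) : ℝ := max 0 (max (1 - m * x) (1 - m * (1 - x)))

theorem continuous_endpointBump (m : ℕ) : Continuous (endpointBump m) := by
  unfold endpointBump; fun_prop

theorem endpointBump_nonneg (m : ℕ) (x : ℝ) : 0 ≤ endpointBump m x := le_max_left _ _

theorem endpointBump_le_one (m : ℕ) {x : ℝ} (hx : x ∈ Icc 0 1) : endpointBump m x ≤ 1 := by
  have : (0 : ℝ) ≤ m := m.cast_nonneg
  unfold endpointBump
  exact max_le zero_le_one (max_le (by nlinarith [hx.1]) (by nlinarith [hx.2]))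

theorem endpointBump_zero (m : ℕ) : endpointBump m 0 = 1 := by
  simp [endpointBump]

theorem endpointBump_one (m : ℕ) : endpointBump m 1 = 1 := by
  simp [endpointBump]

theorem tendsto_endpointBump {x : ℝ} (hx : x ∈ Ioo 0 1) :
    Tendsto (fun m => endpointBump m x) atTop (𝓝 0) := by
  refine tendsto_const_nhds.congr' ?_
  have h₀ := (tendsto_natCast_atTop_atTop.atTop_mul_const hx.1).eventually_ge_atTop 1
  have h₁ := (tendsto_natCast_atTop_atTop.atTop_mul_const (sub_pos.2 hx.2)).eventually_ge_atTop 1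
  filter_upwards [h₀, h₁] with m hm₀ hm₁
  simp only [endpointBump]
  exact (max_eq_left (max_le (by linarith) (by linarith))).symm

namespace UnitAddCircle

theorem liftIco_coe (g : ℝ → ℝ) (t : ℝ) :
    AddCircle.liftIco 1 0 g (t : UnitAddCircle) = g (Int.fract t) := by
  simp [AddCircle.liftIco, AddCircle.coe_equivIco_mk_apply]

theorem measurable_liftIco {g : ℝ → ℝ} (hg : Measurable g) :
    Measurable (AddCircle.liftIco 1 0 g) :=
  (hg.comp measurable_subtype_coe).comp (AddCircle.measurableEquivIco 1 0).measurable

theorem integral_liftIco (g : ℝ → ℝ) :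
    ∫ z, AddCircle.liftIco 1 0 g z = ∫ x in (0 : ℝ)..1, g x := by
  rw [← UnitAddCircle.intervalIntegral_preimage 0, zero_add]
  refine intervalIntegral.integral_congr_ae ?_
  filter_upwards [Measure.ae_ne volume (1 : ℝ)] with x hx hmem
  rw [uIoc_of_le zero_le_one] at hmem
  exact AddCircle.liftIco_zero_coe_apply ⟨hmem.1.le, lt_of_le_of_ne hmem.2 hx⟩

theorem ae_equivIco_mem_Ioo :
    ∀ᵐ z : UnitAddCircle, (AddCircle.equivIco 1 0 z : ℝ) ∈ Ioo 0 1 := by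
  have h0 : volume ({0} : Set UnitAddCircle) = 0 := by
    simpa using AddCircle.volume_closedBall (T := 1) (x := 0) 0
  filter_upwards [measure_eq_zero_iff_ae_notMem.1 h0] with z hz
  obtain ⟨h₀, h₁⟩ := (AddCircle.equivIco 1 0 z).2
  refine ⟨h₀.lt_of_ne fun h => hz ?_, by simpa using h₁⟩
  rw [← AddCircle.coe_equivIco (a := 0) (y := z), ← h, AddCircle.coe_zero]
  rfl

/- `liftIco 1 0 g` is continuous except at the null point `0`. It is squeezed between the
continuous functions `g ∓ endpointBump m * (M ± g)`, which equal `∓M` at both ends of `[0, 1]`,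
hence descend to the circle, and converge to `g` away from `0`. -/
theorem tendsto_integral_liftIco {ι : Type*} {l : Filter ι}
    {μ : ι → Measure UnitAddCircle} [∀ i, IsFiniteMeasure (μ i)]
    (hμ : ∀ h : C(UnitAddCircle, ℝ), Tendsto (fun i => ∫ z, h z ∂μ i) l (𝓝 (∫ z, h z)))
    {g : ℝ → ℝ} (hg : Continuous g) :
    Tendsto (fun i => ∫ z, AddCircle.liftIco 1 0 g z ∂μ i) l (𝓝 (∫ x in (0 : ℝ)..1, g x)) := by
  obtain ⟨M, hM⟩ := isCompact_Icc.exists_bound_of_continuousOn (hg.continuousOn (s := Icc 0 1))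
  let a (m : ℕ) (x : ℝ) : ℝ := g x - endpointBump m x * (M + g x)
  let b (m : ℕ) (x : ℝ) : ℝ := g x + endpointBump m x * (M - g x)
  let A (m : ℕ) : C(UnitAddCircle, ℝ) := ⟨AddCircle.liftIco 1 0 (a m),
    AddCircle.liftIco_zero_continuous (by simp [a, endpointBump_zero, endpointBump_one])
      (hg.sub ((continuous_endpointBump m).mul (continuous_const.add hg))).continuousOn⟩
  let B (m : ℕ) : C(UnitAddCircle, ℝ) := ⟨AddCircle.liftIco 1 0 (b m),
    AddCircle.liftIco_zero_continuous (by simp [b, endpointBump_zero, endpointBump_one])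
      (hg.add ((continuous_endpointBump m).mul (continuous_const.sub hg))).continuousOn⟩
  have hbounds (m : ℕ) (z : UnitAddCircle) : A m z ≤ AddCircle.liftIco 1 0 g z ∧
      AddCircle.liftIco 1 0 g z ≤ B m z ∧ |A m z| ≤ 3 * M ∧ |B m z| ≤ 3 * M := by
    have hx : (AddCircle.equivIco 1 0 z : ℝ) ∈ Icc 0 1 := by
      simpa using Ico_subset_Icc_self (AddCircle.equivIco 1 0 z).2
    set x := (AddCircle.equivIco 1 0 z : ℝ)
    change a m x ≤ g x ∧ g x ≤ b m x ∧ |a m x| ≤ 3 * M ∧ |b m x| ≤ 3 * M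
    obtain ⟨hgl, hgu⟩ := abs_le.1 (hM x hx)
    have hψ₀ := endpointBump_nonneg m x
    have hψ₁ := endpointBump_le_one m hx
    refine ⟨?_, ?_, abs_le.2 ⟨?_, ?_⟩, abs_le.2 ⟨?_, ?_⟩⟩ <;> simp only [a, b] <;> nlinarith
  have hlim : ∀ᵐ z : UnitAddCircle, Tendsto (fun m => A m z) atTop (𝓝 (AddCircle.liftIco 1 0 g z)) ∧
      Tendsto (fun m => B m z) atTop (𝓝 (AddCircle.liftIco 1 0 g z)) := by
    filter_upwards [ae_equivIco_mem_Ioo] with z hz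
    set x := (AddCircle.equivIco 1 0 z : ℝ)
    have hψ := tendsto_endpointBump hz
    constructor
    · have := (hψ.mul_const (M + g x)).const_sub (g x)
      rwa [zero_mul, sub_zero] at this
    · have := (hψ.mul_const (M - g x)).const_add (g x)
      rwa [zero_mul, add_zero] at this
  rw [← integral_liftIco]
  exact tendsto_integral_of_continuous_squeeze hμ (measurable_liftIco hg.measurable) A B
    (fun m z => (hbounds m z).1) (fun m z => (hbounds m z).2.1) (fun m z => (hbounds m z).2.2.1)
    (fun m z => (hbounds m z).2.2.2) (hlim.mono fun _ => And.left) (hlim.mono fun _ => And.right)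

end UnitAddCircle

theorem integral_fourier_map_mul (μ : Measure ℝ) (k : ℤ) (t : ℝ) :
    ∫ z, fourier k z ∂(μ.map fun x => ((t * x : ℝ) : UnitAddCircle)) =
      charFun μ (2 * π * k * t) := by
  rw [integral_map (by fun_prop) (fourier k).continuous.aestronglyMeasurable, charFun_apply_real]
  congr 1 with x
  rw [fourier_coe_apply]
  push_cast
  ring_nf

theorem tendsto_integral_fourier_map_natCast_mul {μ : Measure ℝ} [IsProbabilityMeasure μ]
    (hμ : Tendsto (charFun μ) (cocompact ℝ) (𝓝 0)) (k : ℤ) :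
    Tendsto (fun n : ℕ => ∫ z, fourier k z ∂(μ.map fun x => ((n * x : ℝ) : UnitAddCircle)))
      atTop (𝓝 (∫ z : UnitAddCircle, fourier k z)) := by
  rcases eq_or_ne k 0 with rfl | hk
  · simp_rw [integral_fourier_map_mul]
    simp [Measure.real, AddCircle.measure_univ]
  · rw [AddCircle.integral_fourier_eq_zero (volume : Measure UnitAddCircle) hk]
    simp_rw [integral_fourier_map_mul]
    have hk' : 2 * π * k ≠ 0 := by positivity
    exact hμ.comp ((tendsto_cocompact_mul_left₀ hk').comp
      (tendsto_natCast_atTop_atTop.mono_right atTop_le_cocompact))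

theorem tendsto_integral_comp_fract_natCast_mul {μ : Measure ℝ} [IsProbabilityMeasure μ]
    (hμ : Tendsto (charFun μ) (cocompact ℝ) (𝓝 0)) {g : ℝ → ℝ} (hg : Continuous g) :
    Tendsto (fun n : ℕ => ∫ x, g (Int.fract (n * x)) ∂μ) atTop (𝓝 (∫ x in (0 : ℝ)..1, g x)) := by
  have (n : ℕ) : IsProbabilityMeasure (μ.map fun x => ((n * x : ℝ) : UnitAddCircle)) :=
    Measure.isProbabilityMeasure_map (by fun_prop)
  refine (UnitAddCircle.tendsto_integral_liftIco
    (AddCircle.tendsto_integral_real_of_tendsto_integral_fourier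
      (tendsto_integral_fourier_map_natCast_mul hμ)) hg).congr fun n => ?_
  rw [integral_map (by fun_prop)
    (UnitAddCircle.measurable_liftIco hg.measurable).aestronglyMeasurable]
  simp_rw [UnitAddCircle.liftIco_coe]

theorem mul_floor_mul_div_sub_eq_neg_fract {c : ℝ} (hc : c ≠ 0) (y : ℝ) :
    c * (⌊c * y⌋ / c - y) = -Int.fract (c * y) := by
  rw [mul_sub, mul_div_cancel₀ _ hc, Int.fract]
  ring

/-- If the law of `Y` is Rajchman and `Y_n^{(d)} = ⌊nY⌋/n` is the approximation
by default, then `n(Y_n^{(d)} − Y) = −{nY}` converges in distribution to `−U` with `U`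
uniform on `(0,1)`, and `𝔼[n(Y_n^{(d)} − Y)] → −1/2`. -/
theorem default_graduation_limit
    {Ω : Type*} [MeasurableSpace Ω] (P : Measure Ω) [IsProbabilityMeasure P]
    (Y : Ω → ℝ) (hY : Measurable Y)
    (hRaj : Tendsto (fun u : ℝ => ∫ x, Complex.exp (Complex.I * u * x) ∂(Measure.map Y P))
      (cocompact ℝ) (𝓝 0)) :
    (∀ f : BoundedContinuousFunction ℝ ℝ,
      Tendsto (fun n : ℕ => ∫ ω, f ((n : ℝ) * (⌊(n : ℝ) * Y ω⌋ / (n : ℝ) - Y ω)) ∂P)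
        atTop (𝓝 (∫ u in Ioo (0:ℝ) 1, f (-u)))) ∧
    Tendsto (fun n : ℕ => ∫ ω, (n : ℝ) * (⌊(n : ℝ) * Y ω⌋ / (n : ℝ) - Y ω) ∂P)
      atTop (𝓝 (-(1 / 2))) := by
  have := Measure.isProbabilityMeasure_map (μ := P) hY.aemeasurable
  have hlaw : Tendsto (charFun (P.map Y)) (cocompact ℝ) (𝓝 0) := by
    convert hRaj using 2 with u
    rw [charFun_apply_real]
    congr 1 with x
    ring_nf
  have key {g : ℝ → ℝ} (hg : Continuous g) :
      Tendsto (fun n : ℕ => ∫ ω, g ((n : ℝ) * (⌊(n : ℝ) * Y ω⌋ / (n : ℝ) - Y ω)) ∂P)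
        atTop (𝓝 (∫ u in (0 : ℝ)..1, g (-u))) := by
    refine (tendsto_integral_comp_fract_natCast_mul hlaw (hg.comp continuous_neg)).congr' ?_
    filter_upwards [eventually_ne_atTop 0] with n hn
    rw [integral_map hY.aemeasurable]
    · simp_rw [mul_floor_mul_div_sub_eq_neg_fract (Nat.cast_ne_zero.2 hn), Function.comp_apply]
    · exact ((hg.comp continuous_neg).measurable.comp
        (measurable_fract.comp (measurable_const_mul _))).aestronglyMeasurable
  refine ⟨fun f => ?_, ?_⟩
  · simpa only [intervalIntegral.integral_of_le zero_le_one, integral_Ioc_eq_integral_Ioo]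
      using key f.continuous
  · have hmean : ∫ u in (0 : ℝ)..1, -u = -(1 / 2) := by
      rw [intervalIntegral.integral_neg]
      simp
    simpa [hmean] using key continuous_id
end
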